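/- arXiv:1802.01277 — 6 statements merged into one kernel-verified Lean document; each statement's English description precedes it below -/
import Mathlib

section
/- Let (x̄,λ̄) be a KKT point of the unperturbed problem (a,b)=(0,0). Write η̄ = ∇f(x̄) and ȳ = g(x̄), and define the set-valued maps H(η) = {λ ∈ Y : η + ∇g(x̄)*λ = 0}, E(η) = H(η) ∩ N_K(ȳ), and G_x̄(η,y) = {λ ∈ Y : η + ∇g(x̄)*λ = 0 and y = Π_K(y + λ)} = H(η) ∩ N_K(y). If E is calm at η̄ for λ̄, then G_x̄ is calm at (η̄,ȳ) for λ̄. -/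
open Set Filter Topology Metric Pointwise
open scoped RealInnerProductSpace Classical

noncomputable section

/-- The normal cone of convex analysis: `N_K(z) = {l | ⟪l, y - z⟫ ≤ 0 ∀ y ∈ K}`,
empty when `z ∉ K`. -/
def nCone {E : Type*} [NormedAddCommGroup E] [InnerProductSpace ℝ E]
    (K : Set E) (z : E) : Set E :=
  {l | z ∈ K ∧ ∀ y ∈ K, ⟪l, y - z⟫ ≤ 0}

/-- The metric projection onto `K`: under the standing assumptions (`K` nonempty,
closed and convex in a finite-dimensional space) the distance minimizer exists and
is unique, so this choice-based definition is exactly the metric projection `Π_K`. -/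

def projK {E : Type*} [NormedAddCommGroup E] [InnerProductSpace ℝ E]
    (K : Set E) (z : E) : E :=
  if h : ∃ p, p ∈ K ∧ ∀ y ∈ K, ‖z - p‖ ≤ ‖z - y‖ then h.choose else 0

/-- A set `D` is a pointed closed convex cone. -/
def PointedClosedConvexCone {E : Type*} [NormedAddCommGroup E] [NormedSpace ℝ E]
    (D : Set E) : Prop :=
  IsClosed D ∧ Convex ℝ D ∧ (∀ t : ℝ, 0 ≤ t → ∀ z ∈ D, t • z ∈ D) ∧ D ∩ (-D) ⊆ {0}

/-- `K` is `C²`-cone reducible at `y`: near `y`, `K` is the inverse image of a pointed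
closed convex cone `D` under a twice continuously differentiable map `Ξ` with `Ξ y = 0`
and `Ξ'(y)` surjective.  (Since the target of the reduction is a finite-dimensional
space of dimension at most `dim Y`, it can be taken to be a Euclidean space.) -/
def C2ConeReducibleAt {Y : Type*} [NormedAddCommGroup Y] [InnerProductSpace ℝ Y]
    (K : Set Y) (y : Y) : Prop :=
  ∃ (m : ℕ) (U : Set Y) (D : Set (EuclideanSpace ℝ (Fin m)))
    (Ξ : Y → EuclideanSpace ℝ (Fin m)),
      IsOpen U ∧ y ∈ U ∧ PointedClosedConvexCone D ∧ ContDiffOn ℝ 2 Ξ U ∧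
      Ξ y = 0 ∧ Function.Surjective (fderiv ℝ Ξ y) ∧ K ∩ U = {y' ∈ U | Ξ y' ∈ D}

/-- `K` is `C²`-cone reducible (at every point of `K`). -/
def C2ConeReducible {Y : Type*} [NormedAddCommGroup Y] [InnerProductSpace ℝ Y]
    (K : Set Y) : Prop :=
  ∀ y ∈ K, C2ConeReducibleAt K y

/-- Calmness of a set-valued map `F` at `z0` for `w0 ∈ F z0`. -/
def Calm {Z W : Type*} [NormedAddCommGroup Z] [NormedAddCommGroup W]
    (F : Z → Set W) (z0 : Z) (w0 : W) : Prop :=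
  ∃ κ ε δ : ℝ, 0 < κ ∧ 0 < ε ∧ 0 < δ ∧
    ∀ z : Z, ‖z - z0‖ ≤ ε → ∀ w ∈ F z, ‖w - w0‖ ≤ δ →
      ∃ w' ∈ F z0, ‖w - w'‖ ≤ κ * ‖z - z0‖

/-- Isolated calmness of a set-valued map `F` at `z0` for `w0 ∈ F z0`. -/
def IsolatedCalm {Z W : Type*} [NormedAddCommGroup Z] [NormedAddCommGroup W]
    (F : Z → Set W) (z0 : Z) (w0 : W) : Prop :=
  ∃ κ ε δ : ℝ, 0 < κ ∧ 0 < ε ∧ 0 < δ ∧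
    ∀ z : Z, ‖z - z0‖ ≤ ε → ∀ w ∈ F z, ‖w - w0‖ ≤ δ →
      ‖w - w0‖ ≤ κ * ‖z - z0‖

/-- Metric subregularity of `F` at `z0` for `w0 ∈ F z0`:
`dist(z, F⁻¹(w0)) ≤ κ · dist(w0, F z ∩ B_δ(w0))` for `z` near `z0`; since the
right-hand side is an infimum over `F z ∩ B_δ(w0)` (`= +∞` when empty), this is
equivalently stated pointwise. -/
def MetricallySubregular {Z W : Type*} [NormedAddCommGroup Z] [NormedAddCommGroup W]
    (F : Z → Set W) (z0 : Z) (w0 : W) : Prop :=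
  ∃ κ ε δ : ℝ, 0 < κ ∧ 0 < ε ∧ 0 < δ ∧
    ∀ z : Z, ‖z - z0‖ ≤ ε → ∀ w ∈ F z, ‖w - w0‖ ≤ δ →
      infDist z {z' : Z | w0 ∈ F z'} ≤ κ * ‖w0 - w‖

/-- `φ` has directional derivative `w` at `z` in direction `h`. -/
def HasDirDeriv {E : Type*} [NormedAddCommGroup E] [NormedSpace ℝ E]
    (φ : E → E) (z h w : E) : Prop :=
  Tendsto (fun t : ℝ => t⁻¹ • (φ (z + t • h) - φ z)) (𝓝[>] (0 : ℝ)) (𝓝 w)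

/-- The contingent (Bouligand) tangent cone to `s` at `z`. -/
def contCone {E : Type*} [NormedAddCommGroup E] [NormedSpace ℝ E]
    (s : Set E) (z : E) : Set E :=
  {w | ∃ (t : ℕ → ℝ) (v : ℕ → E), (∀ n, 0 < t n) ∧ Tendsto t atTop (𝓝 0) ∧
        Tendsto v atTop (𝓝 w) ∧ ∀ n, z + t n • v n ∈ s}

/-- The negative polar cone of a set. -/
def negPolar {E : Type*} [NormedAddCommGroup E] [InnerProductSpace ℝ E]
    (C : Set E) : Set E :=
  {z | ∀ d ∈ C, ⟪z, d⟫ ≤ 0}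

/-- The critical cone `C_K(y,u) = T_K(y) ∩ u^⊥`. -/
def criticalCone {E : Type*} [NormedAddCommGroup E] [InnerProductSpace ℝ E]
    (K : Set E) (y u : E) : Set E :=
  contCone K y ∩ {d | ⟪u, d⟫ = 0}

/-- The (outer) second-order tangent set `T²_K(y,h)`. -/
def secondOrderTangent {E : Type*} [NormedAddCommGroup E] [NormedSpace ℝ E]
    (K : Set E) (y h : E) : Set E :=
  {w | ∃ (t : ℕ → ℝ) (v : ℕ → E), (∀ n, 0 < t n) ∧ Tendsto t atTop (𝓝 0) ∧
        Tendsto v atTop (𝓝 w) ∧ ∀ n, y + t n • h + ((t n) ^ 2 / 2) • v n ∈ K}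

variable {X Y : Type*} [NormedAddCommGroup X] [InnerProductSpace ℝ X]
  [FiniteDimensional ℝ X] [NormedAddCommGroup Y] [InnerProductSpace ℝ Y]
  [FiniteDimensional ℝ Y]

/-- The KKT solution map of the canonically perturbed problem:
`∇f(x) + ∇g(x)*λ = a` and `λ ∈ N_K(g(x) − b)`. -/
def sKKT (f : X → ℝ) (g : X → Y) (K : Set Y) (a : X) (b : Y) : Set (X × Y) :=
  {p | gradient f p.1 + ContinuousLinearMap.adjoint (fderiv ℝ g p.1) p.2 = a ∧
       p.2 ∈ nCone K (g p.1 - b)}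

/-- The multiplier set map `M(x,a,b)`. -/
def mSet (f : X → ℝ) (g : X → Y) (K : Set Y) (x : X) (a : X) (b : Y) : Set Y :=
  {l | (x, l) ∈ sKKT f g K a b}

/-- The stationary point map `X_KKT(a,b)`. -/
def xKKT (f : X → ℝ) (g : X → Y) (K : Set Y) (a : X) (b : Y) : Set X :=
  {x | ∃ l, (x, l) ∈ sKKT f g K a b}

/-- The Hessian `∇²ₓₓL(x,λ)` of the Lagrangian `L(·,λ)` at `x`. -/
def hessLxx (f : X → ℝ) (g : X → Y) (x : X) (l : Y) : X →L[ℝ] X :=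
  fderiv ℝ (fun u => gradient (fun v => f v + ⟪l, g v⟫) u) x

/-- The multiplier `l0` is noncritical: the only solutions `(ξ,v)` of
`∇²ₓₓL(x̄,λ̄)ξ + ∇g(x̄)*v = 0`, `g'(x̄)ξ − Π_K'(g(x̄)+λ̄; g'(x̄)ξ+v) = 0` have `ξ = 0`. -/
def Noncritical (f : X → ℝ) (g : X → Y) (K : Set Y) (x0 : X) (l0 : Y) : Prop :=
  ∀ (ξ : X) (v : Y),
    hessLxx f g x0 l0 ξ + ContinuousLinearMap.adjoint (fderiv ℝ g x0) v = 0 →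
    HasDirDeriv (projK K) (g x0 + l0) (fderiv ℝ g x0 ξ + v) (fderiv ℝ g x0 ξ) →
    ξ = 0

/-- Strong calmness of `S_KKT` at the origin for `(x̄,λ̄)`. -/
def StrongCalm (f : X → ℝ) (g : X → Y) (K : Set Y) (x0 : X) (l0 : Y) : Prop :=
  ∃ δ ε κ : ℝ, 0 < δ ∧ 0 < ε ∧ 0 < κ ∧
    ∀ (a : X) (b : Y), ‖(a, b)‖ ≤ δ →
      ∀ (x : X) (l : Y), (x, l) ∈ sKKT f g K a b → ‖(x, l) - (x0, l0)‖ ≤ ε →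
        ‖x - x0‖ + infDist l (mSet f g K x0 0 0) ≤ κ * ‖(a, b)‖

/-- Pseudo-isolated calmness of `X_KKT` at the origin for `x̄` (relative to `λ̄`). -/
def PseudoIsolatedCalm (f : X → ℝ) (g : X → Y) (K : Set Y) (x0 : X) (l0 : Y) : Prop :=
  ∃ ε δ κ : ℝ, 0 < ε ∧ 0 < δ ∧ 0 < κ ∧
    ∀ (a : X) (b : Y), ‖(a, b)‖ ≤ δ →
      ∀ (x : X) (l : Y), (x, l) ∈ sKKT f g K a b → ‖(x, l) - (x0, l0)‖ ≤ ε →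
        ‖x - x0‖ ≤ κ * ‖(a, b)‖


set_option linter.unusedSectionVars false
set_option maxHeartbeats 1000000

/-- small positive parameter limit helper -/
lemma aux_le_of_forall_small {a c t₁ : ℝ} (ht₁ : 0 < t₁)
    (h : ∀ t : ℝ, 0 < t → t ≤ t₁ → a ≤ c * t) : a ≤ 0 := by
  by_contra h'
  push_neg at h'
  rcases le_or_gt c 0 with hc | hc
  · have := h t₁ ht₁ le_rfl
    nlinarith
  · have ht : 0 < min t₁ (a / (2 * c)) := lt_min ht₁ (by positivity)
    have h1 := h _ ht (min_le_left _ _)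
    have h2 : c * min t₁ (a / (2 * c)) ≤ c * (a / (2 * c)) :=
      mul_le_mul_of_nonneg_left (min_le_right _ _) hc.le
    have h3 : a ≤ c * (a / (2 * c)) := h1.trans h2
    have h4 : c * (a / (2 * c)) = a / 2 := by field_simp
    rw [h4] at h3
    linarith

section AuxProj
variable {E : Type*} [NormedAddCommGroup E] [InnerProductSpace ℝ E] [CompleteSpace E]

/-- existence of the metric projection -/
lemma aux_proj_exists {K : Set E} (hne : K.Nonempty) (hcl : IsClosed K)
    (hcv : Convex ℝ K) (z : E) :
    ∃ p, p ∈ K ∧ ∀ y ∈ K, ‖z - p‖ ≤ ‖z - y‖ := by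
  obtain ⟨v, hvK, hv⟩ := exists_norm_eq_iInf_of_complete_convex hne hcl.isComplete hcv z
  refine ⟨v, hvK, fun y hy => ?_⟩
  rw [hv]
  exact ciInf_le ⟨0, by rintro _ ⟨w, rfl⟩; positivity⟩ (⟨y, hy⟩ : K)

lemma aux_min_inner {K : Set E} (hcv : Convex ℝ K) {z p : E} (hp : p ∈ K)
    (hmin : ∀ y ∈ K, ‖z - p‖ ≤ ‖z - y‖) : ∀ y ∈ K, ⟪z - p, y - p⟫ ≤ 0 := by
  have hne : Nonempty K := ⟨⟨p, hp⟩⟩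
  have : ‖z - p‖ = ⨅ w : K, ‖z - w‖ := by
    refine le_antisymm (le_ciInf fun w => hmin w w.2) ?_
    exact ciInf_le ⟨0, by rintro _ ⟨w, rfl⟩; positivity⟩ (⟨p, hp⟩ : K)
  exact (norm_eq_iInf_iff_real_inner_le_zero hcv hp).1 this

lemma aux_projK_eq_iff {K : Set E} (hne : K.Nonempty) (hcl : IsClosed K)
    (hcv : Convex ℝ K) {y l : E} :
    y = projK K (y + l) ↔ l ∈ nCone K y := by
  have hex := aux_proj_exists hne hcl hcv (y + l)
  set p := projK K (y + l) with hp
  have hps : p ∈ K ∧ ∀ w ∈ K, ‖y + l - p‖ ≤ ‖y + l - w‖ := by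
    rw [hp, projK, dif_pos hex]; exact hex.choose_spec
  have hchar : ∀ w ∈ K, ⟪y + l - p, w - p⟫ ≤ 0 := aux_min_inner hcv hps.1 hps.2
  constructor
  · intro h
    refine ⟨h ▸ hps.1, fun w hw => ?_⟩
    have := hchar w hw
    rw [← h] at this
    simpa using this
  · rintro ⟨hyK, hl⟩
    have h1 : ⟪y + l - p, y - p⟫ ≤ 0 := hchar y hyK
    have h2 : ⟪l, p - y⟫ ≤ 0 := hl p hps.1
    have key : ‖y - p‖ ^ 2 ≤ 0 := by
      have e1 : ⟪y + l - p, y - p⟫ = ⟪y - p, y - p⟫ + ⟪l, y - p⟫ := by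
        rw [show y + l - p = (y - p) + l by abel, inner_add_left]
      have e2 : ⟪l, p - y⟫ = -⟪l, y - p⟫ := by
        rw [show p - y = -(y - p) by abel, inner_neg_right]
      rw [← real_inner_self_eq_norm_sq]
      nlinarith [h1, h2, e1, e2]
    have h0 : ‖y - p‖ = 0 := by nlinarith [sq_nonneg ‖y - p‖, norm_nonneg (y - p)]
    exact sub_eq_zero.mp (norm_eq_zero.mp h0)

lemma aux_polar_close (Co : ConvexCone ℝ E) (hcl : IsClosed (Co : Set E))
    (hne : (Co : Set E).Nonempty) {l : E} {ε : ℝ} (hε : 0 ≤ ε)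
    (h : ∀ d ∈ (Co : Set E), ⟪l, d⟫ ≤ ε * ‖d‖) :
    ∃ p, (∀ d ∈ (Co : Set E), ⟪p, d⟫ ≤ 0) ∧ ‖l - p‖ ≤ ε := by
  set P : Set E := {p : E | ∀ d ∈ (Co : Set E), ⟪p, d⟫ ≤ 0} with hPdef
  have hP0 : (0 : E) ∈ P := fun d _ => by simp
  have hPcl : IsClosed P := by
    have : P = ⋂ d ∈ (Co : Set E), {p : E | ⟪p, d⟫ ≤ 0} := by
      ext p; simp [hPdef]
    rw [this]
    exact isClosed_biInter fun d _ =>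
      isClosed_le (Continuous.inner continuous_id continuous_const) continuous_const
  have hPcv : Convex ℝ P := by
    intro p hp q hq a b ha hb hab
    intro d hd
    have h1 := hp d hd
    have h2 := hq d hd
    rw [inner_add_left, real_inner_smul_left, real_inner_smul_left]
    nlinarith
  have hPadd : ∀ p₁ ∈ P, ∀ p₂ ∈ P, p₁ + p₂ ∈ P := by
    intro p₁ h1 p₂ h2 d hd
    rw [inner_add_left]
    linarith [h1 d hd, h2 d hd]
  obtain ⟨p, hpP, hmin⟩ := aux_proj_exists ⟨0, hP0⟩ hPcl hPcv l
  have hchar : ∀ c ∈ P, ⟪l - p, c - p⟫ ≤ 0 := aux_min_inner hPcv hpP hmin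
  set q := l - p with hq
  have hqp : ⟪q, p⟫ = 0 := by
    have h0 : ⟪q, (0 : E) - p⟫ ≤ 0 := hchar 0 hP0
    have h2p : ((2 : ℝ) • p) ∈ P := by
      intro d hd
      rw [real_inner_smul_left]
      linarith [hpP d hd]
    have h2 : ⟪q, (2 : ℝ) • p - p⟫ ≤ 0 := hchar _ h2p
    have e1 : ⟪q, (0 : E) - p⟫ = -⟪q, p⟫ := by rw [zero_sub, inner_neg_right]
    have e2 : ((2 : ℝ) • p - p) = p := by module
    rw [e2] at h2
    linarith [e1 ▸ h0]
  have hqCo : q ∈ (Co : Set E) := by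
    by_contra hqn
    have h0Co : (0 : E) ∈ (Co : Set E) := by
      obtain ⟨x, hx⟩ := hne
      have ht : Tendsto (fun t : ℝ => t • x) (𝓝[>] (0 : ℝ)) (𝓝 0) := by
        exact (Continuous.tendsto' (f := fun t : ℝ => t • x) (by fun_prop) 0 0
          (by simp)).mono_left nhdsWithin_le_nhds
      exact hcl.mem_of_tendsto ht
        (eventually_mem_nhdsWithin.mono fun t ht => Co.smul_mem ht hx)
    let C' : ProperCone ℝ E :=
      { carrier := (Co : Set E)
        add_mem' := fun ha hb => Co.add_mem ha hb
        zero_mem' := h0Co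
        smul_mem' := fun c x hx => by
          change ((c : ℝ) • x) ∈ (Co : Set E)
          rcases eq_or_lt_of_le c.2 with h | h
          · rw [← h, zero_smul]; exact h0Co
          · exact Co.smul_mem h hx
        isClosed' := hcl }
    obtain ⟨w, hw1, hw2⟩ :=
      ProperCone.hyperplane_separation' C' (x₀ := q) (fun h => hqn h)
    rw [real_inner_comm] at hw2
    have hmw : -w ∈ P := by
      intro d hd
      rw [inner_neg_left]
      have := hw1 d hd
      rw [real_inner_comm] at this
      linarith
    have := hchar _ (hPadd p hpP (-w) hmw)
    rw [add_sub_cancel_left, inner_neg_right] at this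
    rw [real_inner_comm] at hw2
    linarith
  refine ⟨p, hpP, ?_⟩
  have hsq : ‖q‖ ^ 2 ≤ ε * ‖q‖ := by
    have h1 : ⟪l, q⟫ ≤ ε * ‖q‖ := h q hqCo
    have e : ⟪l, q⟫ = ‖q‖ ^ 2 + ⟪p, q⟫ := by
      rw [show l = q + p by rw [hq]; abel, inner_add_left, real_inner_self_eq_norm_sq]
    rw [real_inner_comm] at hqp
    rw [e, hqp, add_zero] at h1
    exact h1
  by_contra hcon
  push_neg at hcon
  nlinarith [norm_nonneg q]

end AuxProj

/-- Main lemma: for a `C²`-cone reducible closed convex set, the normal cone map is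
outer Lipschitz at the reference point. -/
lemma aux_nCone_calm {Y : Type*} [NormedAddCommGroup Y] [InnerProductSpace ℝ Y]
    [FiniteDimensional ℝ Y] {K : Set Y} (hcv : Convex ℝ K) {y0 : Y} (hy0K : y0 ∈ K)
    (hred : C2ConeReducibleAt K y0) :
    ∃ C ρ : ℝ, 0 < C ∧ 0 < ρ ∧ ∀ y ∈ K, ‖y - y0‖ ≤ ρ →
      ∀ l ∈ nCone K y, ∃ p ∈ nCone K y0, ‖l - p‖ ≤ C * ‖l‖ * ‖y - y0‖ := by
  obtain ⟨m, U, D, Xi, hU, hy0U, ⟨hDcl, hDcv, hDsm, -⟩, hXi, hXi0, hsurj, hKU⟩ := hred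
  set A := fderiv ℝ Xi y0 with hA
  have hrange : LinearMap.range (A : Y →ₗ[ℝ] EuclideanSpace ℝ (Fin m)) = ⊤ :=
    LinearMap.range_eq_top.mpr hsurj
  set Rinv := A.nonlinearRightInverseOfSurjective hrange with hRinvdef
  have hNpos : (0 : ℝ) < (Rinv.nnnorm : ℝ) := by
    exact_mod_cast A.nonlinearRightInverseOfSurjective_nnnorm_pos hrange
  set N : ℝ := (Rinv.nnnorm : ℝ) with hNdef
  have hDadd : ∀ z₁ ∈ D, ∀ z₂ ∈ D, z₁ + z₂ ∈ D := by
    intro z₁ h1 z₂ h2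
    have hmid := hDcv h1 h2 (by norm_num : (0:ℝ) ≤ 1/2) (by norm_num : (0:ℝ) ≤ 1/2)
      (by norm_num)
    have h2' := hDsm 2 (by norm_num) _ hmid
    convert h2' using 1
    module
  have hy0KU : y0 ∈ K ∩ U := ⟨hy0K, hy0U⟩
  have h0D : (0 : EuclideanSpace ℝ (Fin m)) ∈ D := by
    rw [hKU] at hy0KU
    exact hXi0 ▸ hy0KU.2
  have hcd2 : ContDiffAt ℝ 2 Xi y0 := hXi.contDiffAt (hU.mem_nhds hy0U)
  have hcd1 : ContDiffAt ℝ 1 (fderiv ℝ Xi) y0 :=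
    hcd2.fderiv_right (by norm_num)
  obtain ⟨K₀, tset, htset, hlip⟩ := hcd1.exists_lipschitzOnWith
  set L : ℝ := (K₀ : ℝ) + 1 with hLdef
  have hK0 : (0:ℝ) ≤ (K₀ : ℝ) := K₀.coe_nonneg
  have hLpos : 0 < L := by positivity
  obtain ⟨r₁, hr₁pos, hball₁⟩ :=
    Metric.mem_nhds_iff.mp (Filter.inter_mem (hU.mem_nhds hy0U) htset)
  set r₀ : ℝ := min (r₁ / 2) ((2 * N * L)⁻¹) with hr₀def
  have hr₀pos : 0 < r₀ := lt_min (by positivity) (by positivity)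
  have hsub : closedBall y0 r₀ ⊆ U ∩ tset := by
    intro w hw
    apply hball₁
    rw [mem_ball]
    calc dist w y0 ≤ r₀ := mem_closedBall.mp hw
    _ ≤ r₁ / 2 := min_le_left _ _
    _ < r₁ := by linarith
  have hNL : 2 * N * L * r₀ ≤ 1 := by
    have h1 : r₀ ≤ (2 * N * L)⁻¹ := min_le_right _ _
    have h2 : 0 < 2 * N * L := by positivity
    calc 2 * N * L * r₀ ≤ 2 * N * L * (2 * N * L)⁻¹ :=
      mul_le_mul_of_nonneg_left h1 h2.le
    _ = 1 := by field_simp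
  have taylor : ∀ r : ℝ, r ≤ r₀ → ∀ u ∈ closedBall y0 r, ∀ v ∈ closedBall y0 r,
      ‖Xi v - Xi u - A (v - u)‖ ≤ L * r * ‖v - u‖ := by
    intro r hr u hu v hv
    have hr0 : 0 ≤ r := dist_nonneg.trans (mem_closedBall.mp hu)
    have hsub' : closedBall y0 r ⊆ closedBall y0 r₀ := closedBall_subset_closedBall hr
    have hy0t : y0 ∈ tset := (hsub (mem_closedBall_self hr₀pos.le)).2
    have hbound : ∀ w ∈ closedBall y0 r, ‖fderiv ℝ Xi w - A‖ ≤ L * r := by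
      intro w hw
      have hwt : w ∈ tset := (hsub (hsub' hw)).2
      have h1 : dist (fderiv ℝ Xi w) (fderiv ℝ Xi y0) ≤ (K₀ : ℝ) * dist w y0 :=
        hlip.dist_le_mul w hwt y0 hy0t
      have h2 : dist w y0 ≤ r := mem_closedBall.mp hw
      have h3 : ‖fderiv ℝ Xi w - A‖ = dist (fderiv ℝ Xi w) (fderiv ℝ Xi y0) :=
        (dist_eq_norm _ _).symm
      rw [h3]
      calc dist (fderiv ℝ Xi w) (fderiv ℝ Xi y0) ≤ (K₀ : ℝ) * dist w y0 := h1
      _ ≤ L * r := by rw [hLdef]; nlinarith [dist_nonneg (x := w) (y := y0)]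
    have hder : ∀ w ∈ closedBall y0 r,
        HasFDerivWithinAt (fun u => Xi u - A u) (fderiv ℝ Xi w - A) (closedBall y0 r) w := by
      intro w hw
      have hwU : w ∈ U := (hsub (hsub' hw)).1
      have hdiff : DifferentiableAt ℝ Xi w :=
        (hXi.contDiffAt (hU.mem_nhds hwU)).differentiableAt (by norm_num)
      exact (hdiff.hasFDerivAt.sub A.hasFDerivAt).hasFDerivWithinAt
    have key := (convex_closedBall y0 r).norm_image_sub_le_of_norm_hasFDerivWithin_le
      hder hbound hu hv
    have e : (fun u => Xi u - A u) v - (fun u => Xi u - A u) u = Xi v - Xi u - A (v - u) := by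
      simp only [map_sub]
      abel
    rw [e] at key
    exact key
  set c : NNReal := Real.toNNReal ((2 * N)⁻¹) with hcdef
  have hcoe : (c : ℝ) = (2 * N)⁻¹ := Real.coe_toNNReal _ (by positivity)
  have happrox : ApproximatesLinearOn Xi A (closedBall y0 r₀) c := by
    intro u hu v hv
    have h1 := taylor r₀ le_rfl v hv u hu
    have hLr : L * r₀ ≤ (c : ℝ) := by
      rw [hcoe, inv_eq_one_div, le_div_iff₀ (by positivity : (0:ℝ) < 2 * N)]
      nlinarith
    calc ‖Xi u - Xi v - A (u - v)‖ ≤ L * r₀ * ‖u - v‖ := h1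
    _ ≤ (c : ℝ) * ‖u - v‖ := mul_le_mul_of_nonneg_right hLr (norm_nonneg _)
  set ρ : ℝ := r₀ / 4 with hρdef
  have hρpos : 0 < ρ := by positivity
  refine ⟨2 * N * L, ρ, by positivity, hρpos, ?_⟩
  intro y hyK hyρ l hl
  have hyU : y ∈ U := by
    apply (hsub ?_).1
    rw [mem_closedBall, dist_eq_norm]
    calc ‖y - y0‖ ≤ ρ := hyρ
    _ ≤ r₀ := by rw [hρdef]; linarith
  have hXiyD : Xi y ∈ D := by
    have hm : y ∈ K ∩ U := ⟨hyK, hyU⟩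
    rw [hKU] at hm
    exact hm.2
  have hynorm : 0 ≤ ‖y - y0‖ := norm_nonneg _
  have stepB : ∀ d : Y, A d ∈ D → ⟪l, d⟫ ≤ 2 * N * L * ‖l‖ * ‖y - y0‖ * ‖d‖ := by
    intro d hAd
    rcases eq_or_ne d 0 with rfl | hd0
    · simp
    have hdpos : 0 < ‖d‖ := norm_pos_iff.mpr hd0
    have ht₁pos : 0 < ρ / ‖d‖ := by positivity
    have key : ∀ t : ℝ, 0 < t → t ≤ ρ / ‖d‖ →
        ⟪l, d⟫ - 2 * N * L * ‖l‖ * ‖y - y0‖ * ‖d‖ ≤ (2 * N * L * ‖l‖ * ‖d‖ ^ 2) * t := by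
      intro t htpos htle
      have htd : t * ‖d‖ ≤ ρ := (le_div_iff₀ hdpos).mp htle
      set b := y + t • d with hbdef
      set r : ℝ := ‖y - y0‖ + t * ‖d‖ with hrdef
      have hrρ : r ≤ 2 * ρ := by rw [hrdef]; linarith
      have hrr₀ : r ≤ r₀ := by rw [hρdef] at hrρ; linarith
      have hyball : y ∈ closedBall y0 r := by
        rw [mem_closedBall, dist_eq_norm, hrdef]
        nlinarith [mul_pos htpos hdpos]
      have hbmy : b - y = t • d := by rw [hbdef]; abel
      have hbnorm : ‖b - y‖ = t * ‖d‖ := by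
        rw [hbmy, norm_smul, Real.norm_eq_abs, abs_of_pos htpos]
      have hbball : b ∈ closedBall y0 r := by
        rw [mem_closedBall]
        calc dist b y0 ≤ dist b y + dist y y0 := dist_triangle _ _ _
        _ = ‖b - y‖ + ‖y - y0‖ := by rw [dist_eq_norm, dist_eq_norm]
        _ = t * ‖d‖ + ‖y - y0‖ := by rw [hbnorm]
        _ = r := by rw [hrdef]; ring
      have he := taylor r hrr₀ y hyball b hbball
      set e := Xi b - Xi y - A (b - y) with hedef
      have henorm : ‖e‖ ≤ L * r * (t * ‖d‖) := by
        rw [hedef]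
        calc ‖Xi b - Xi y - A (b - y)‖ ≤ L * r * ‖b - y‖ := he
        _ = L * r * (t * ‖d‖) := by rw [hbnorm]
      set ε := 2 * N * ‖e‖ with hεdef
      have hε0 : 0 ≤ ε := by positivity
      have hεle : ε ≤ t * ‖d‖ := by
        have h1 : 2 * N * ‖e‖ ≤ 2 * N * (L * r * (t * ‖d‖)) :=
          mul_le_mul_of_nonneg_left henorm (by positivity)
        have h4 : 2 * N * L * r ≤ 2 * N * L * r₀ :=
          mul_le_mul_of_nonneg_left hrr₀ (by positivity)
        have h5 : 2 * N * L * r * (t * ‖d‖) ≤ 1 * (t * ‖d‖) := by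
          have := mul_pos htpos hdpos
          nlinarith
        rw [hεdef]
        calc 2 * N * ‖e‖ ≤ 2 * N * (L * r * (t * ‖d‖)) := h1
        _ = 2 * N * L * r * (t * ‖d‖) := by ring
        _ ≤ 1 * (t * ‖d‖) := h5
        _ = t * ‖d‖ := one_mul _
      have hballsub : closedBall b ε ⊆ closedBall y0 r₀ := by
        intro w hw
        rw [mem_closedBall] at hw ⊢
        have h1 : dist w y0 ≤ dist w b + dist b y0 := dist_triangle _ _ _
        have h2 : dist b y0 ≤ r := mem_closedBall.mp hbball
        have h6 : ρ = r₀ / 4 := hρdef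
        linarith
      have hsurjOn := happrox.surjOn_closedBall_of_nonlinearRightInverse Rinv hε0 hballsub
      set z := Xi y + t • A d with hzdef
      have hzD : z ∈ D := hDadd _ hXiyD _ (hDsm t htpos.le _ hAd)
      have hze : ‖z - Xi b‖ = ‖e‖ := by
        rw [hedef, hbmy, map_smul, hzdef, ← norm_neg]
        congr 1
        abel
      have hztarget : z ∈ closedBall (Xi b) (((Rinv.nnnorm : ℝ)⁻¹ - (c : ℝ)) * ε) := by
        rw [mem_closedBall, dist_eq_norm, hze]
        have hcalc : ((Rinv.nnnorm : ℝ)⁻¹ - (c : ℝ)) * ε = ‖e‖ := by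
          rw [hcoe, hεdef, ← hNdef]
          field_simp
          ring
        rw [hcalc]
      obtain ⟨y', hy'ball, hXiy'⟩ := hsurjOn hztarget
      have hy'K : y' ∈ K := by
        have hy'U : y' ∈ U := (hsub (hballsub hy'ball)).1
        have hm : y' ∈ {w ∈ U | Xi w ∈ D} := ⟨hy'U, by rw [hXiy']; exact hzD⟩
        rw [← hKU] at hm
        exact hm.1
      have hinner := hl.2 y' hy'K
      have e4 : ‖b - y'‖ ≤ ε := by
        rw [mem_closedBall] at hy'ball
        rw [← dist_eq_norm, dist_comm]
        exact hy'ball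
      have e1 : ⟪l, b - y⟫ = t * ⟪l, d⟫ := by rw [hbmy, real_inner_smul_right]
      have e2 : ⟪l, b - y⟫ = ⟪l, b - y'⟫ + ⟪l, y' - y⟫ := by
        rw [← inner_add_right]
        congr 1
        abel
      have e3 : ⟪l, b - y'⟫ ≤ ‖l‖ * ‖b - y'‖ := real_inner_le_norm _ _
      have e5 : ‖l‖ * ‖b - y'‖ ≤ ‖l‖ * ε := mul_le_mul_of_nonneg_left e4 (norm_nonneg l)
      have hmain : t * ⟪l, d⟫ ≤ ‖l‖ * ε := by
        rw [← e1, e2]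
        linarith
      have hεr : ε ≤ 2 * N * L * r * (t * ‖d‖) := by
        rw [hεdef]
        calc 2 * N * ‖e‖ ≤ 2 * N * (L * r * (t * ‖d‖)) :=
          mul_le_mul_of_nonneg_left henorm (by positivity)
        _ = 2 * N * L * r * (t * ‖d‖) := by ring
      have hfinal : t * ⟪l, d⟫ ≤ t * (2 * N * L * ‖l‖ * r * ‖d‖) := by
        calc t * ⟪l, d⟫ ≤ ‖l‖ * ε := hmain
        _ ≤ ‖l‖ * (2 * N * L * r * (t * ‖d‖)) :=
          mul_le_mul_of_nonneg_left hεr (norm_nonneg l)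
        _ = t * (2 * N * L * ‖l‖ * r * ‖d‖) := by ring
      have hdiv : ⟪l, d⟫ ≤ 2 * N * L * ‖l‖ * r * ‖d‖ := le_of_mul_le_mul_left hfinal htpos
      rw [hrdef] at hdiv
      have hexp : 2 * N * L * ‖l‖ * (‖y - y0‖ + t * ‖d‖) * ‖d‖ =
          2 * N * L * ‖l‖ * ‖y - y0‖ * ‖d‖ + (2 * N * L * ‖l‖ * ‖d‖ ^ 2) * t := by ring
      linarith [hexp ▸ hdiv]
    have hfin := aux_le_of_forall_small ht₁pos key
    linarith
  set Co : ConvexCone ℝ Y :=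
    { carrier := A ⁻¹' D
      smul_mem' := by
        intro s hs w hw
        simp only [Set.mem_preimage, map_smul]
        exact hDsm s hs.le _ hw
      add_mem' := by
        intro w₁ h1 w₂ h2
        simp only [Set.mem_preimage, map_add]
        exact hDadd _ h1 _ h2 } with hCodef
  have hCocl : IsClosed (Co : Set Y) := hDcl.preimage A.continuous
  have hCone : ((Co : Set Y)).Nonempty := ⟨0, show A 0 ∈ D by rw [map_zero]; exact h0D⟩
  have hε0' : (0:ℝ) ≤ 2 * N * L * ‖l‖ * ‖y - y0‖ := by positivity
  obtain ⟨p, hpP, hpl⟩ := aux_polar_close Co hCocl hCone hε0' (fun d hd => stepB d hd)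
  refine ⟨p, ⟨hy0K, ?_⟩, hpl⟩
  intro y' hy'K
  set d := y' - y0 with hddef
  rcases eq_or_ne d 0 with hd0 | hd0
  · rw [hd0, inner_zero_right]
  have hdpos : 0 < ‖d‖ := norm_pos_iff.mpr hd0
  have hs₁pos : 0 < min 1 (r₀ / ‖d‖) := lt_min one_pos (by positivity)
  have key : ∀ s : ℝ, 0 < s → s ≤ min 1 (r₀ / ‖d‖) →
      ⟪p, d⟫ ≤ (‖p‖ * N * L * ‖d‖ ^ 2) * s := by
    intro s hs hsle
    have hs1 : s ≤ 1 := hsle.trans (min_le_left _ _)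
    have hsd : s * ‖d‖ ≤ r₀ := (le_div_iff₀ hdpos).mp (hsle.trans (min_le_right _ _))
    set w := y0 + s • d with hwdef
    have hwK : w ∈ K := by
      have hwe : w = (1 - s) • y0 + s • y' := by rw [hwdef, hddef]; module
      rw [hwe]
      exact hcv hy0K hy'K (by linarith) hs.le (by ring)
    have hwy0 : w - y0 = s • d := by rw [hwdef]; abel
    have hwnorm : ‖w - y0‖ = s * ‖d‖ := by
      rw [hwy0, norm_smul, Real.norm_eq_abs, abs_of_pos hs]
    have hwball : w ∈ closedBall y0 (s * ‖d‖) := by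
      rw [mem_closedBall, dist_eq_norm, hwnorm]
    have hy0ball : y0 ∈ closedBall y0 (s * ‖d‖) := mem_closedBall_self (by positivity)
    have he := taylor (s * ‖d‖) hsd y0 hy0ball w hwball
    have hwU : w ∈ U := by
      apply (hsub ?_).1
      rw [mem_closedBall, dist_eq_norm, hwnorm]
      exact hsd
    have hXiwD : Xi w ∈ D := by
      have hm : w ∈ K ∩ U := ⟨hwK, hwU⟩
      rw [hKU] at hm
      exact hm.2
    have hXiw : ‖Xi w - A (s • d)‖ ≤ L * (s * ‖d‖) * (s * ‖d‖) := by
      have hee : Xi w - A (s • d) = Xi w - Xi y0 - A (w - y0) := by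
        rw [hwy0, hXi0]
        abel
      rw [hee]
      calc ‖Xi w - Xi y0 - A (w - y0)‖ ≤ L * (s * ‖d‖) * ‖w - y0‖ := he
      _ = L * (s * ‖d‖) * (s * ‖d‖) := by rw [hwnorm]
    set cc := s • d + Rinv (Xi w - A (s • d)) with hccdef
    have hccCo : cc ∈ (Co : Set Y) := by
      show A cc ∈ D
      rw [hccdef, map_add, Rinv.right_inv]
      have hee : A (s • d) + (Xi w - A (s • d)) = Xi w := by abel
      rw [hee]
      exact hXiwD
    have hRb : ‖Rinv (Xi w - A (s • d))‖ ≤ N * ‖Xi w - A (s • d)‖ := Rinv.bound _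
    have hineq : ⟪p, s • d⟫ ≤ ‖p‖ * (N * (L * (s * ‖d‖) * (s * ‖d‖))) := by
      have hsplit : ⟪p, s • d⟫ = ⟪p, s • d - cc⟫ + ⟪p, cc⟫ := by
        rw [← inner_add_right]
        congr 1
        abel
      have h1 : ⟪p, cc⟫ ≤ 0 := hpP cc hccCo
      have h2 : ⟪p, s • d - cc⟫ ≤ ‖p‖ * ‖s • d - cc‖ := real_inner_le_norm _ _
      have h3 : s • d - cc = -(Rinv (Xi w - A (s • d))) := by rw [hccdef]; abel
      have h4 : ‖s • d - cc‖ ≤ N * (L * (s * ‖d‖) * (s * ‖d‖)) := by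
        rw [h3, norm_neg]
        calc ‖Rinv (Xi w - A (s • d))‖ ≤ N * ‖Xi w - A (s • d)‖ := hRb
        _ ≤ N * (L * (s * ‖d‖) * (s * ‖d‖)) :=
          mul_le_mul_of_nonneg_left hXiw hNpos.le
      have h5 : ‖p‖ * ‖s • d - cc‖ ≤ ‖p‖ * (N * (L * (s * ‖d‖) * (s * ‖d‖))) :=
        mul_le_mul_of_nonneg_left h4 (norm_nonneg p)
      linarith [hsplit ▸ le_refl (⟪p, s • d⟫)]
    have hps : ⟪p, s • d⟫ = s * ⟪p, d⟫ := real_inner_smul_right _ _ _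
    rw [hps] at hineq
    have hmul : s * ⟪p, d⟫ ≤ s * ((‖p‖ * N * L * ‖d‖ ^ 2) * s) := by
      calc s * ⟪p, d⟫ ≤ ‖p‖ * (N * (L * (s * ‖d‖) * (s * ‖d‖))) := hineq
      _ = s * ((‖p‖ * N * L * ‖d‖ ^ 2) * s) := by ring
    exact le_of_mul_le_mul_left hmul hs
  exact aux_le_of_forall_small hs₁pos key


/-- Proposition 2.6(a): if `E = H ∩ N_K(ȳ)` is calm at `η̄ = ∇f(x̄)`
for `λ̄`, then `G_x̄(η,y) = {λ | η + ∇g(x̄)*λ = 0, y = Π_K(y + λ)}` is calm at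
`(η̄, ȳ) = (∇f(x̄), g(x̄))` for `λ̄`. -/
theorem stmt_0 (f : X → ℝ) (g : X → Y) (K : Set Y)
    (hf : ContDiff ℝ 2 f) (hg : ContDiff ℝ 2 g)
    (hKne : K.Nonempty) (hKcl : IsClosed K) (hKcv : Convex ℝ K)
    (hKred : C2ConeReducible K)
    (x0 : X) (l0 : Y) (hKKT : (x0, l0) ∈ sKKT f g K 0 0)
    (hE : Calm (fun η : X =>
        {l : Y | η + ContinuousLinearMap.adjoint (fderiv ℝ g x0) l = 0} ∩ nCone K (g x0))
        (gradient f x0) l0) :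
    Calm (fun p : X × Y =>
        {l : Y | p.1 + ContinuousLinearMap.adjoint (fderiv ℝ g x0) l = 0 ∧
                 p.2 = projK K (p.2 + l)})
        (gradient f x0, g x0) l0 := by
  obtain ⟨κE, εE, δE, hκE, hεE, hδE, hEcalm⟩ := hE
  set B := ContinuousLinearMap.adjoint (fderiv ℝ g x0) with hBdef
  have hy0K : g x0 ∈ K := by
    have h2 := hKKT.2
    rw [sub_zero] at h2
    exact h2.1
  obtain ⟨C, ρ, hC, hρ, hmain⟩ := aux_nCone_calm hKcv hy0K (hKred _ hy0K)
  set CR := C * (‖l0‖ + 1) with hCRdef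
  have hCRpos : 0 < CR := by positivity
  set M := 1 + ‖B‖ * CR with hMdef
  have hM1 : (1:ℝ) ≤ M := le_add_of_nonneg_right (by positivity)
  have hMpos : (0:ℝ) < M := lt_of_lt_of_le one_pos hM1
  refine ⟨CR + κE * M, min ρ (min (εE / M) (δE / (2 * CR + 1))), min 1 (δE / 2),
    by positivity, lt_min hρ (lt_min (by positivity) (by positivity)),
    lt_min one_pos (by positivity), ?_⟩
  intro z hz l hlG hld
  obtain ⟨hlin, hproj⟩ := hlG
  set z0 : X × Y := (gradient f x0, g x0) with hz0def
  set Δ := ‖z - z0‖ with hΔdef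
  have hΔ0 : 0 ≤ Δ := norm_nonneg _
  have hΔ1 : ‖z.1 - gradient f x0‖ ≤ Δ := by
    have h := norm_fst_le (z - z0)
    simpa using h
  have hΔ2 : ‖z.2 - g x0‖ ≤ Δ := by
    have h := norm_snd_le (z - z0)
    simpa using h
  have hΔρ : Δ ≤ ρ := le_trans hz (min_le_left _ _)
  have hΔε : Δ ≤ εE / M := le_trans hz (le_trans (min_le_right _ _) (min_le_left _ _))
  have hΔδ : Δ ≤ δE / (2 * CR + 1) :=
    le_trans hz (le_trans (min_le_right _ _) (min_le_right _ _))
  have hlnC : l ∈ nCone K z.2 := (aux_projK_eq_iff hKne hKcl hKcv).1 hproj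
  have hz2K : z.2 ∈ K := hlnC.1
  have hyρ : ‖z.2 - g x0‖ ≤ ρ := le_trans hΔ2 hΔρ
  obtain ⟨p, hpN, hpl⟩ := hmain z.2 hz2K hyρ l hlnC
  have hld1 : ‖l - l0‖ ≤ 1 := le_trans hld (min_le_left _ _)
  have hldδ : ‖l - l0‖ ≤ δE / 2 := le_trans hld (min_le_right _ _)
  have hlb : ‖l‖ ≤ ‖l0‖ + 1 := by
    have := norm_sub_norm_le l l0
    linarith
  have hpl' : ‖l - p‖ ≤ CR * Δ := by
    have h1 : C * ‖l‖ * ‖z.2 - g x0‖ ≤ C * (‖l0‖ + 1) * Δ := by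
      have ha : C * ‖l‖ * ‖z.2 - g x0‖ ≤ C * ‖l‖ * Δ :=
        mul_le_mul_of_nonneg_left hΔ2 (by positivity)
      have hb : C * ‖l‖ * Δ ≤ C * (‖l0‖ + 1) * Δ :=
        mul_le_mul_of_nonneg_right (mul_le_mul_of_nonneg_left hlb hC.le) hΔ0
      linarith
    rw [hCRdef]
    linarith
  set η₂ := -(B p) with hη₂def
  have hpE : p ∈ {l : Y | η₂ + B l = 0} ∩ nCone K (g x0) := by
    constructor
    · show η₂ + B p = 0
      rw [hη₂def]
      abel
    · exact hpN
  have hη₂norm : ‖η₂ - gradient f x0‖ ≤ M * Δ := by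
    have hBl : B l = -z.1 := eq_neg_of_add_eq_zero_right hlin
    have heq : η₂ - gradient f x0 = (z.1 - gradient f x0) + B (l - p) := by
      rw [hη₂def, map_sub, hBl]
      abel
    rw [heq]
    calc ‖(z.1 - gradient f x0) + B (l - p)‖
        ≤ ‖z.1 - gradient f x0‖ + ‖B (l - p)‖ := norm_add_le _ _
    _ ≤ Δ + ‖B‖ * ‖l - p‖ := add_le_add hΔ1 (B.le_opNorm _)
    _ ≤ Δ + ‖B‖ * (CR * Δ) := by nlinarith [norm_nonneg B, hpl', norm_nonneg (l - p)]
    _ = M * Δ := by rw [hMdef]; ring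
  have hη₂ε : ‖η₂ - gradient f x0‖ ≤ εE := by
    calc ‖η₂ - gradient f x0‖ ≤ M * Δ := hη₂norm
    _ ≤ M * (εE / M) := mul_le_mul_of_nonneg_left hΔε hMpos.le
    _ = εE := by field_simp
  have hpδ : ‖p - l0‖ ≤ δE := by
    have h1 : ‖p - l0‖ ≤ ‖p - l‖ + ‖l - l0‖ := by
      have := dist_triangle p l l0
      rw [dist_eq_norm, dist_eq_norm, dist_eq_norm] at this
      exact this
    have h2 : ‖p - l‖ = ‖l - p‖ := norm_sub_rev _ _
    have h3 : CR * Δ ≤ CR * (δE / (2 * CR + 1)) := mul_le_mul_of_nonneg_left hΔδ hCRpos.le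
    have h4 : CR * (δE / (2 * CR + 1)) ≤ δE / 2 := by
      have hpos : (0:ℝ) < 2 * CR + 1 := by positivity
      rw [← mul_div_assoc, div_le_div_iff₀ hpos (by norm_num : (0:ℝ) < 2)]
      nlinarith
    linarith
  obtain ⟨l'', hl''E, hl''b⟩ := hEcalm η₂ hη₂ε p hpE hpδ
  refine ⟨l'', ⟨hl''E.1, ?_⟩, ?_⟩
  · exact (aux_projK_eq_iff hKne hKcl hKcv).2 hl''E.2
  · have htri : ‖l - l''‖ ≤ ‖l - p‖ + ‖p - l''‖ := by
      have h := dist_triangle l p l''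
      rw [dist_eq_norm, dist_eq_norm, dist_eq_norm] at h
      exact h
    have hb2 : ‖p - l''‖ ≤ κE * (M * Δ) :=
      le_trans hl''b (mul_le_mul_of_nonneg_left hη₂norm hκE.le)
    have : (CR + κE * M) * Δ = CR * Δ + κE * (M * Δ) := by ring
    linarith

end
end

section
/- Let (x̄,λ̄) be a KKT point of the unperturbed problem (a,b)=(0,0). Write η̄ = ∇f(x̄) and ȳ = g(x̄), and define H(η) = {λ ∈ Y : η + ∇g(x̄)*λ = 0} and E(η) = H(η) ∩ N_K(ȳ). If there exist δ > 0 and γ > 0 such that dist(λ, E(η̄)) ≤ γ·max{dist(λ, N_K(ȳ)), dist(λ, H(η̄))} for all λ with ‖λ − λ̄‖ ≤ δ, then E is calm at η̄ for λ̄. Moreover, this distance estimate is implied by the condition ri(N_K(ȳ)) ∩ H(η̄) ≠ ∅, where ri denotes the relative interior. -/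
open Set Filter Topology Metric Pointwise
open scoped RealInnerProductSpace Classical

noncomputable section

section AuxLemmas

variable {E F : Type*} [NormedAddCommGroup E] [InnerProductSpace ℝ E]
  [FiniteDimensional ℝ E] [NormedAddCommGroup F] [NormedSpace ℝ F]

private lemma aux_dist_ker (T : E →L[ℝ] F) :
    ∃ c : ℝ, 0 < c ∧ ∀ v : E, infDist v (LinearMap.ker T.toLinearMap : Set E) ≤ c * ‖T v‖ := by
  set S : Submodule ℝ E := LinearMap.ker T.toLinearMap with hS
  set Tr : Sᗮ →ₗ[ℝ] F := T.toLinearMap.comp Sᗮ.subtype with hTr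
  have hker : LinearMap.ker Tr = ⊥ := by
    rw [Submodule.eq_bot_iff]
    rintro ⟨x, hx⟩ hx0
    have h1 : x ∈ S := by
      have : T x = 0 := hx0
      simpa [hS, LinearMap.mem_ker] using this
    have := (Submodule.disjoint_def.mp (Submodule.orthogonal_disjoint S)) x h1 hx
    exact Subtype.ext this
  obtain ⟨c, hc, hA⟩ := Tr.exists_antilipschitzWith hker
  refine ⟨c, hc, fun v => ?_⟩
  obtain ⟨s, hs, u, hu, huv⟩ := S.exists_add_mem_mem_orthogonal v
  have hTu : Tr ⟨u, hu⟩ = T v := by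
    have hTs : T s = 0 := hs
    simp [hTr, huv, hTs]
  have hnu : ‖u‖ ≤ c * ‖T v‖ := by
    have := hA.le_mul_dist ⟨u, hu⟩ 0
    simpa [hTu, dist_eq_norm] using this
  calc infDist v (S : Set E) ≤ dist v s := infDist_le_dist_of_mem hs
    _ = ‖u‖ := by rw [dist_eq_norm]; rw [huv]; simp
    _ ≤ c * ‖T v‖ := hnu

private lemma aux_le_infDist {α : Type*} [PseudoMetricSpace α] {s : Set α} {x : α} {b : ℝ}
    (hs : s.Nonempty) (h : ∀ y ∈ s, b ≤ dist x y) : b ≤ infDist x s := by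
  by_contra hlt
  push_neg at hlt
  obtain ⟨y, hy, hd⟩ := (infDist_lt_iff hs).mp hlt
  exact absurd (h y hy) (not_le.mpr hd)

private lemma aux_proj (W : Submodule ℝ E) (y : E) (w : E) (hw : w ∈ W) :
    ‖y - Submodule.orthogonalProjection W y‖ ≤ ‖y - w‖ ∧
    ‖(Submodule.orthogonalProjection W y : E) - w‖ ≤ ‖y - w‖ := by
  set p : E := (Submodule.orthogonalProjection W y : E) with hp
  have hmem : y - p ∈ Wᗮ := Submodule.sub_starProjection_mem_orthogonal y
  have hWm : p - w ∈ W := Submodule.sub_mem W (Submodule.orthogonalProjection W y).2 hw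
  have hinner : ⟪y - p, p - w⟫ = 0 := by
    rw [real_inner_comm]; exact hmem _ hWm
  have hsum : (y - p) + (p - w) = y - w := by abel
  have hsq : ‖y - w‖ ^ 2 = ‖y - p‖ ^ 2 + ‖p - w‖ ^ 2 := by
    rw [← hsum, norm_add_sq_real, hinner]; ring
  constructor <;>
  · nlinarith [norm_nonneg (y - p), norm_nonneg (p - w), norm_nonneg (y - w)]

private lemma aux_infDist_proj (W : Submodule ℝ E) (y : E) :
    infDist y (W : Set E) = ‖y - Submodule.orthogonalProjection W y‖ := by
  apply le_antisymm
  · have : dist y (Submodule.orthogonalProjection W y : E) = ‖y - Submodule.orthogonalProjection W y‖ :=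
      dist_eq_norm _ _
    exact this ▸ infDist_le_dist_of_mem (Submodule.orthogonalProjection W y).2
  · refine aux_le_infDist ⟨0, W.zero_mem⟩ fun w hw => ?_
    rw [dist_eq_norm]
    exact (aux_proj W y w hw).1

private lemma aux_two_subspace (W V : Submodule ℝ E) :
    ∃ c : ℝ, 0 < c ∧ ∀ y : E,
      infDist y ((W ⊓ V : Submodule ℝ E) : Set E) ≤
        c * (infDist y (W : Set E) + infDist y (V : Set E)) := by
  let Pw : E →L[ℝ] E := W.subtypeL.comp (Submodule.orthogonalProjection W)
  let Pv : E →L[ℝ] E := V.subtypeL.comp (Submodule.orthogonalProjection V)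
  let T : E →L[ℝ] E × E := (ContinuousLinearMap.id ℝ E - Pw).prod (ContinuousLinearMap.id ℝ E - Pv)
  have hker : LinearMap.ker T.toLinearMap = W ⊓ V := by
    ext y
    simp only [LinearMap.mem_ker, ContinuousLinearMap.coe_coe, Submodule.mem_inf]
    constructor
    · intro h
      have h1 : y - Pw y = 0 := congrArg Prod.fst h
      have h2 : y - Pv y = 0 := congrArg Prod.snd h
      constructor
      · rw [← Submodule.starProjection_eq_self_iff (K := W)]
        exact (sub_eq_zero.mp h1).symm
      · rw [← Submodule.starProjection_eq_self_iff (K := V)]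
        exact (sub_eq_zero.mp h2).symm
    · rintro ⟨h1, h2⟩
      have e1 : (Submodule.orthogonalProjection W y : E) = y := Submodule.starProjection_eq_self_iff.mpr h1
      have e2 : (Submodule.orthogonalProjection V y : E) = y := Submodule.starProjection_eq_self_iff.mpr h2
      have : T y = (y - Pw y, y - Pv y) := rfl
      rw [this]
      simp [Pw, Pv, e1, e2]
  obtain ⟨c, hc, hd⟩ := aux_dist_ker T
  refine ⟨c, hc, fun y => ?_⟩
  have hTy : ‖T y‖ ≤ infDist y (W : Set E) + infDist y (V : Set E) := by
    have h1 : ‖y - Pw y‖ = infDist y (W : Set E) := by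
      rw [aux_infDist_proj W y]; rfl
    have h2 : ‖y - Pv y‖ = infDist y (V : Set E) := by
      rw [aux_infDist_proj V y]; rfl
    have : ‖T y‖ = max ‖y - Pw y‖ ‖y - Pv y‖ := rfl
    rw [this, h1, h2]
    exact max_le (le_add_of_nonneg_right infDist_nonneg) (le_add_of_nonneg_left infDist_nonneg)
  calc infDist y ((W ⊓ V : Submodule ℝ E) : Set E)
      = infDist y (LinearMap.ker T.toLinearMap : Set E) := by rw [hker]
    _ ≤ c * ‖T y‖ := hd y
    _ ≤ c * (infDist y (W : Set E) + infDist y (V : Set E)) :=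
        mul_le_mul_of_nonneg_left hTy hc.le

private lemma aux_nCone_closed (K : Set E) (z : E) (hz : z ∈ K) : IsClosed (nCone K z) := by
  have : nCone K z = ⋂ y ∈ K, {l : E | ⟪l, y - z⟫ ≤ 0} := by
    ext l; simp [nCone, hz]
  rw [this]
  exact isClosed_biInter fun y _ =>
    isClosed_le (Continuous.inner continuous_id continuous_const) continuous_const

private lemma aux_nCone_convex (K : Set E) (z : E) : Convex ℝ (nCone K z) := by
  rintro a ⟨hz, ha⟩ b ⟨-, hb⟩ s t hs ht hst
  refine ⟨hz, fun y hy => ?_⟩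
  rw [inner_add_left, real_inner_smul_left, real_inner_smul_left]
  have h1 := mul_nonpos_of_nonneg_of_nonpos hs (ha y hy)
  have h2 := mul_nonpos_of_nonneg_of_nonpos ht (hb y hy)
  linarith

private lemma aux_span_sub_affineSpan {N : Set E} (h0 : (0 : E) ∈ N) :
    (Submodule.span ℝ N : Set E) ⊆ (affineSpan ℝ N : Set E) := by
  intro y hy
  have h0A : (0 : E) ∈ affineSpan ℝ N := subset_affineSpan ℝ N h0
  have hdir : y - 0 ∈ (affineSpan ℝ N).direction := by
    rw [direction_affineSpan]
    have hsub : Submodule.span ℝ N ≤ vectorSpan ℝ N := by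
      rw [Submodule.span_le]
      intro n hn
      have := vsub_mem_vectorSpan ℝ hn h0
      simpa using this
    simpa using hsub hy
  exact (AffineSubspace.vsub_right_mem_direction_iff_mem h0A y).mp (by simpa using hdir)

private lemma aux_ri_ball {N : Set E} {z : E} (hz : z ∈ intrinsicInterior ℝ N) :
    ∃ ε : ℝ, 0 < ε ∧ ∀ y ∈ (affineSpan ℝ N : Set E), ‖y - z‖ < ε → y ∈ N := by
  obtain ⟨w, hw, hwz⟩ := mem_intrinsicInterior.mp hz
  rw [mem_interior_iff_mem_nhds, Metric.mem_nhds_iff] at hw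
  obtain ⟨ε, hε, hball⟩ := hw
  refine ⟨ε, hε, fun y hy hnorm => ?_⟩
  have : (⟨y, hy⟩ : affineSpan ℝ N) ∈ Metric.ball w ε := by
    rw [Metric.mem_ball, Subtype.dist_eq, hwz, dist_eq_norm]
    exact hnorm
  exact hball this

end AuxLemmas

variable {X Y : Type*} [NormedAddCommGroup X] [InnerProductSpace ℝ X]
  [FiniteDimensional ℝ X] [NormedAddCommGroup Y] [InnerProductSpace ℝ Y]
  [FiniteDimensional ℝ Y]

set_option maxHeartbeats 1000000 in
/-- Proposition 2.6(b): the metric-qualification estimate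
`dist(λ, E(η̄)) ≤ γ max{dist(λ, N_K(ȳ)), dist(λ, H(η̄))}` near `λ̄` implies calmness of
`E = H(·) ∩ N_K(ȳ)` at `η̄` for `λ̄`; moreover this estimate is implied by
`ri(N_K(ȳ)) ∩ H(η̄) ≠ ∅`. -/
theorem stmt_1 (f : X → ℝ) (g : X → Y) (K : Set Y)
    (hf : ContDiff ℝ 2 f) (hg : ContDiff ℝ 2 g)
    (hKne : K.Nonempty) (hKcl : IsClosed K) (hKcv : Convex ℝ K)
    (hKred : C2ConeReducible K)
    (x0 : X) (l0 : Y) (hKKT : (x0, l0) ∈ sKKT f g K 0 0) :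
    ((∃ δ γ : ℝ, 0 < δ ∧ 0 < γ ∧ ∀ l : Y, ‖l - l0‖ ≤ δ →
        infDist l ({l' : Y | gradient f x0 +
            ContinuousLinearMap.adjoint (fderiv ℝ g x0) l' = 0} ∩ nCone K (g x0)) ≤
          γ * max (infDist l (nCone K (g x0)))
            (infDist l {l' : Y | gradient f x0 +
              ContinuousLinearMap.adjoint (fderiv ℝ g x0) l' = 0})) →
      Calm (fun η : X =>
        {l : Y | η + ContinuousLinearMap.adjoint (fderiv ℝ g x0) l = 0} ∩ nCone K (g x0))
        (gradient f x0) l0) ∧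
    ((intrinsicInterior ℝ (nCone K (g x0)) ∩
        {l' : Y | gradient f x0 + ContinuousLinearMap.adjoint (fderiv ℝ g x0) l' = 0}).Nonempty →
      (∃ δ γ : ℝ, 0 < δ ∧ 0 < γ ∧ ∀ l : Y, ‖l - l0‖ ≤ δ →
        infDist l ({l' : Y | gradient f x0 +
            ContinuousLinearMap.adjoint (fderiv ℝ g x0) l' = 0} ∩ nCone K (g x0)) ≤
          γ * max (infDist l (nCone K (g x0)))
            (infDist l {l' : Y | gradient f x0 +
              ContinuousLinearMap.adjoint (fderiv ℝ g x0) l' = 0}))) := by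
  classical
  set T : Y →L[ℝ] X := ContinuousLinearMap.adjoint (fderiv ℝ g x0) with hTdef
  set η : X := gradient f x0 with hηdef
  set N : Set Y := nCone K (g x0) with hNdef
  set H : Set Y := {l' : Y | η + T l' = 0} with hHdef
  have hKKT1 : η + T l0 = 0 := hKKT.1
  have hl0N : l0 ∈ N := by
    have := hKKT.2
    rwa [sub_zero] at this
  have hyK : g x0 ∈ K := hl0N.1
  have hl0H : l0 ∈ H := hKKT1
  have hNcl : IsClosed N := aux_nCone_closed K (g x0) hyK
  have hNcv : Convex ℝ N := aux_nCone_convex K (g x0)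
  have hNne : N.Nonempty := ⟨l0, hl0N⟩
  have hHne : H.Nonempty := ⟨l0, hl0H⟩
  have hHcl : IsClosed H := isClosed_eq (continuous_const.add T.continuous) continuous_const
  have hTl0 : T l0 = -η := eq_neg_of_add_eq_zero_right hKKT1
  constructor
  · -- Part 1 : the distance estimate implies calmness
    rintro ⟨δ0, γ, hδ0, hγ, hest⟩
    obtain ⟨c, hc, hdk⟩ := aux_dist_ker T
    refine ⟨γ * c + 1, 1, δ0, by positivity, one_pos, hδ0, ?_⟩
    intro z hz l hl hlδ
    obtain ⟨hl1, hl2⟩ := hl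
    have hl1' : z + T l = 0 := hl1
    have hE_closed : IsClosed (H ∩ N) := hHcl.inter hNcl
    have hE_ne : (H ∩ N).Nonempty := ⟨l0, hl0H, hl0N⟩
    have h1 : infDist l H ≤ c * ‖z - η‖ := by
      have hTd : T (l - l0) = η - z := by
        rw [map_sub, hTl0, sub_neg_eq_add]
        have hTl : T l = -z := eq_neg_of_add_eq_zero_right hl1'
        rw [hTl]; abel
      have hker := hdk (l - l0)
      rw [hTd] at hker
      have hle : infDist l H ≤ infDist (l - l0) (LinearMap.ker T.toLinearMap : Set Y) := by
        refine aux_le_infDist ⟨0, Submodule.zero_mem _⟩ fun k hk => ?_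
        have hkH : l0 + k ∈ H := by
          show η + T (l0 + k) = 0
          have hk0 : T k = 0 := hk
          rw [map_add, hk0, add_zero]
          exact hKKT1
        calc infDist l H ≤ dist l (l0 + k) := infDist_le_dist_of_mem hkH
          _ = dist (l - l0) k := by rw [dist_eq_norm, dist_eq_norm]; congr 1; abel
      calc infDist l H ≤ infDist (l - l0) (LinearMap.ker T.toLinearMap : Set Y) := hle
        _ ≤ c * ‖η - z‖ := hker
        _ = c * ‖z - η‖ := by rw [norm_sub_rev]
    have hmax : max (infDist l N) (infDist l H) ≤ c * ‖z - η‖ := by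
      refine max_le ?_ h1
      rw [infDist_zero_of_mem hl2]
      positivity
    have hEd : infDist l (H ∩ N) ≤ γ * (c * ‖z - η‖) :=
      le_trans (hest l hlδ) (mul_le_mul_of_nonneg_left hmax hγ.le)
    obtain ⟨l', hl'E, hl'd⟩ := hE_closed.exists_infDist_eq_dist hE_ne l
    refine ⟨l', hl'E, ?_⟩
    have : ‖l - l'‖ = infDist l (H ∩ N) := by rw [hl'd, dist_eq_norm]
    rw [this]
    nlinarith [norm_nonneg (z - η), hc.le, hγ.le]
  · -- Part 2 : relative interior condition implies the distance estimate
    rintro ⟨z, hzri, hzH⟩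
    have hzN : z ∈ N := intrinsicInterior_subset hzri
    have h0N : (0 : Y) ∈ N := ⟨hyK, fun y hy => by simp⟩
    set V : Submodule ℝ Y := Submodule.span ℝ N with hVdef
    have hNV : N ⊆ (V : Set Y) := Submodule.subset_span
    obtain ⟨ε, hε, hball⟩ := aux_ri_ball hzri
    have hballV : ∀ y ∈ (V : Set Y), ‖y - z‖ < ε → y ∈ N := fun y hy =>
      hball y (aux_span_sub_affineSpan h0N hy)
    set ρ : ℝ := ε / 2 with hρdef
    have hρ : 0 < ρ := by positivity
    have hzV : z ∈ V := hNV hzN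
    have hzH' : η + T z = 0 := hzH
    have hTz : T z = -η := eq_neg_of_add_eq_zero_right hzH'
    set W : Submodule ℝ Y := LinearMap.ker T.toLinearMap with hWdef
    have hHiffz : ∀ l' : Y, l' ∈ H ↔ l' - z ∈ W := by
      intro l'
      constructor
      · intro hl'
        have : η + T l' = 0 := hl'
        have hTl' : T l' = -η := eq_neg_of_add_eq_zero_right this
        show T (l' - z) = 0
        rw [map_sub, hTl', hTz, sub_self]
      · intro hl'
        have h0 : T (l' - z) = 0 := hl'
        show η + T l' = 0
        rw [map_sub] at h0
        have : T l' = T z := by rwa [sub_eq_zero] at h0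
        rw [this, hTz, add_neg_cancel]
    obtain ⟨cA, hcA, hA⟩ := aux_two_subspace W V
    set R : ℝ := 2 * cA + 1 + ‖l0 - z‖ with hRdef
    have hR0 : 0 < R := by
      rw [hRdef]; nlinarith [norm_nonneg (l0 - z)]
    clear_value R
    set B : ℝ := R / ρ with hBdef
    have hB0 : 0 < B := by rw [hBdef]; exact div_pos hR0 hρ
    clear_value B
    refine ⟨1, 2 * (cA + B * (cA + 1)), one_pos, by nlinarith, ?_⟩
    intro l hlδ
    set dN : ℝ := infDist l N with hdNdef
    set dH : ℝ := infDist l H with hdHdef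
    have hdN0 : 0 ≤ dN := infDist_nonneg
    have hdH0 : 0 ≤ dH := infDist_nonneg
    have hdN1 : dN ≤ 1 := by
      calc dN ≤ dist l l0 := infDist_le_dist_of_mem hl0N
        _ = ‖l - l0‖ := dist_eq_norm _ _
        _ ≤ 1 := hlδ
    have hdH1 : dH ≤ 1 := by
      calc dH ≤ dist l l0 := infDist_le_dist_of_mem hl0H
        _ = ‖l - l0‖ := dist_eq_norm _ _
        _ ≤ 1 := hlδ
    -- Step A : find m ∈ H ∩ V close to l
    set y : Y := l - z with hydef
    clear_value y
    set p : Y := (Submodule.orthogonalProjection (W ⊓ V) y : Y) with hpdef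
    have hpWV : p ∈ W ⊓ V := (Submodule.orthogonalProjection (W ⊓ V) y).2
    have hpW : p ∈ W := hpWV.1
    have hpV : p ∈ V := hpWV.2
    clear_value p
    set m : Y := z + p with hmdef
    clear_value m
    have hmH : m ∈ H := by
      rw [hHiffz]
      simpa [hmdef] using hpW
    have hmV : m ∈ V := hmdef ▸ V.add_mem hzV hpV
    have hiW : infDist y (W : Set Y) ≤ dH := by
      refine aux_le_infDist hHne fun h hh => ?_
      have : h - z ∈ W := (hHiffz h).mp hh
      calc infDist y (W : Set Y) ≤ dist y (h - z) := infDist_le_dist_of_mem this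
        _ = dist l h := by rw [dist_eq_norm, dist_eq_norm, hydef]; congr 1; abel
    have hiV : infDist y (V : Set Y) ≤ dN := by
      refine aux_le_infDist hNne fun n hn => ?_
      have hnz : n - z ∈ V := V.sub_mem (hNV hn) hzV
      calc infDist y (V : Set Y) ≤ dist y (n - z) := infDist_le_dist_of_mem hnz
        _ = dist l n := by rw [dist_eq_norm, dist_eq_norm, hydef]; congr 1; abel
    have hm_dist : ‖l - m‖ ≤ cA * (dH + dN) := by
      have h1 : ‖l - m‖ = ‖y - p‖ := by rw [hmdef, hydef]; congr 1; abel
      have h2 : ‖y - p‖ = infDist y ((W ⊓ V : Submodule ℝ Y) : Set Y) := by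
        rw [hpdef]; exact (aux_infDist_proj (W ⊓ V) y).symm
      rw [h1, h2]
      calc infDist y ((W ⊓ V : Submodule ℝ Y) : Set Y)
          ≤ cA * (infDist y (W : Set Y) + infDist y (V : Set Y)) := hA y
        _ ≤ cA * (dH + dN) := by
            apply mul_le_mul_of_nonneg_left _ hcA.le
            linarith
    -- Step B : project m onto N
    obtain ⟨c', hc'N, hc'd⟩ := hNcl.exists_infDist_eq_dist hNne m
    set s : ℝ := ‖m - c'‖ with hsdef
    have hs0 : 0 ≤ s := hsdef ▸ norm_nonneg _
    clear_value s
    have hs_eq : s = infDist m N := by rw [hc'd, dist_eq_norm, hsdef]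
    have hs_bound : s ≤ cA * (dH + dN) + dN := by
      rw [hs_eq]
      calc infDist m N ≤ infDist l N + dist m l := infDist_le_infDist_add_dist
        _ = dN + ‖l - m‖ := by rw [dist_comm, dist_eq_norm]
        _ ≤ dN + cA * (dH + dN) := by linarith
        _ = cA * (dH + dN) + dN := by ring
    have hgoal : ∃ w ∈ H ∩ N, ‖l - w‖ ≤ cA * (dH + dN) + B * s := by
      by_cases hsz : s = 0
      · have hmc : m = c' := by rwa [hsdef, norm_eq_zero, sub_eq_zero] at hsz
        refine ⟨m, ⟨hmH, hmc ▸ hc'N⟩, ?_⟩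
        have : 0 ≤ B * s := by positivity
        linarith [hm_dist]
      · have hspos : 0 < s := lt_of_le_of_ne hs0 (Ne.symm hsz)
        set μ : ℝ := s / (s + ρ) with hμdef
        clear_value μ
        have hμ0 : 0 ≤ μ := by rw [hμdef]; positivity
        have hμ1 : μ ≤ 1 := by
          rw [hμdef, div_le_one (by positivity)]
          linarith
        set aux : Y := z + (ρ / s) • (m - c') with hauxdef
        have hauxV : aux ∈ V :=
          V.add_mem hzV (V.smul_mem _ (V.sub_mem hmV (hNV hc'N)))
        clear_value aux
        have hauxnorm : ‖aux - z‖ = ρ := by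
          have h1 : aux - z = (ρ / s) • (m - c') := by rw [hauxdef]; abel
          rw [h1, norm_smul, Real.norm_eq_abs, abs_of_pos (div_pos hρ hspos), ← hsdef,
            div_mul_cancel₀ _ hsz]
        have hauxN : aux ∈ N := by
          refine hballV aux hauxV ?_
          rw [hauxnorm, hρdef]
          linarith
        have hsρ : s + ρ ≠ 0 := by positivity
        have hμρ : μ * (ρ / s) = 1 - μ := by
          rw [hμdef]
          field_simp
          ring
        set w : Y := (1 - μ) • m + μ • z with hwdef
        clear_value w
        have hw_eq : w = (1 - μ) • c' + μ • aux := by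
          rw [hwdef, hauxdef, smul_add, smul_smul, hμρ]
          module
        have hwN : w ∈ N := by
          rw [hw_eq]
          exact hNcv hc'N hauxN (by linarith) hμ0 (by ring)
        have hwH : w ∈ H := by
          show η + T w = 0
          have hTm : T m = -η := eq_neg_of_add_eq_zero_right hmH
          rw [hwdef, map_add, map_smul, map_smul, hTm, hTz, ← add_smul]
          simp
        have hmz_bound : ‖m - z‖ ≤ R := by
          have h1 : ‖m - z‖ ≤ ‖m - l‖ + ‖l - l0‖ + ‖l0 - z‖ := by
            have := norm_add₃_le (a := m - l) (b := l - l0) (c := l0 - z)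
            simpa using this
          have h2 : ‖m - l‖ = ‖l - m‖ := norm_sub_rev _ _
          have h3 : cA * (dH + dN) ≤ 2 * cA := by nlinarith
          rw [hRdef]
          rw [h2] at h1
          linarith [hm_dist, hlδ]
        have hmw : ‖m - w‖ ≤ B * s := by
          have h1 : m - w = μ • (m - z) := by
            rw [hwdef]
            module
          have h2 : ‖m - w‖ = μ * ‖m - z‖ := by
            rw [h1, norm_smul, Real.norm_eq_abs, abs_of_nonneg hμ0]
          have hμle : μ ≤ s / ρ := by
            rw [hμdef]
            gcongr
            linarith
          have h4 : μ * ‖m - z‖ ≤ (s / ρ) * R := by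
            apply mul_le_mul hμle hmz_bound (norm_nonneg _) (by positivity)
          have h5 : (s / ρ) * R = B * s := by
            rw [hBdef]
            field_simp
          rw [h2]
          linarith [h4, h5.symm.le, h5 ▸ h4]
        refine ⟨w, ⟨hwH, hwN⟩, ?_⟩
        calc ‖l - w‖ ≤ ‖l - m‖ + ‖m - w‖ := by
              rw [← dist_eq_norm, ← dist_eq_norm, ← dist_eq_norm]
              exact dist_triangle l m w
          _ ≤ cA * (dH + dN) + B * s := by linarith [hm_dist]
    obtain ⟨w, hwE, hw⟩ := hgoal
    have hfin : infDist l (H ∩ N) ≤ cA * (dH + dN) + B * s := by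
      calc infDist l (H ∩ N) ≤ dist l w := infDist_le_dist_of_mem hwE
        _ = ‖l - w‖ := dist_eq_norm _ _
        _ ≤ _ := hw
    have hM1 : dN ≤ max dN dH := le_max_left _ _
    have hM2 : dH ≤ max dN dH := le_max_right _ _
    have hM0 : 0 ≤ max dN dH := le_trans hdN0 hM1
    nlinarith [hfin, hs_bound, mul_le_mul_of_nonneg_left hs_bound hB0.le,
      mul_nonneg hcA.le (add_nonneg hdH0 hdN0), hcA.le, hB0.le,
      mul_le_mul_of_nonneg_left (add_le_add hM2 hM1) hcA.le,
      mul_le_mul_of_nonneg_left (add_le_add hM2 hM1) (mul_nonneg hB0.le (by linarith : (0:ℝ) ≤ cA + 1))]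


end
end

section
/- Let (x̄,λ̄) be a KKT point of the unperturbed problem (a,b)=(0,0). The following error bound holds — there exist ε > 0 and c > 0 such that for all (x,λ) with ‖(x,λ) − (x̄,λ̄)‖ ≤ ε one has ‖x − x̄‖ + dist(λ, M(x̄,0,0)) ≤ c·‖(∇ₓL(x,λ), g(x) − Π_K(λ + g(x)))‖ — if and only if the KKT solution map S_KKT is strongly calm at the origin for (x̄,λ̄). -/
open Set Filter Topology Metric Pointwise
open scoped RealInnerProductSpace Classical

noncomputable section

variable {X Y : Type*} [NormedAddCommGroup X] [InnerProductSpace ℝ X]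
  [FiniteDimensional ℝ X] [NormedAddCommGroup Y] [InnerProductSpace ℝ Y]
  [FiniteDimensional ℝ Y]

section ProjHelpers

variable {E : Type*} [NormedAddCommGroup E] [InnerProductSpace ℝ E] [CompleteSpace E]
variable {K : Set E}

lemma projK_spec (hne : K.Nonempty) (hcl : IsClosed K) (hcv : Convex ℝ K) (z : E) :
    projK K z ∈ K ∧ ∀ y ∈ K, ⟪z - projK K z, y - projK K z⟫ ≤ 0 := by
  obtain ⟨v, hvK, hv⟩ := exists_norm_eq_iInf_of_complete_convex hne hcl.isComplete hcv z
  have hbdd : BddBelow (Set.range fun w : K => ‖z - (w : E)‖) := by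
    refine ⟨0, ?_⟩
    rintro y ⟨w, rfl⟩
    exact norm_nonneg _
  have hex : ∃ p, p ∈ K ∧ ∀ y ∈ K, ‖z - p‖ ≤ ‖z - y‖ := by
    refine ⟨v, hvK, fun y hy => ?_⟩
    rw [hv]
    exact ciInf_le hbdd ⟨y, hy⟩
  haveI : Nonempty K := hne.to_subtype
  have hpe : projK K z = hex.choose := by unfold projK; rw [dif_pos hex]
  obtain ⟨hp1, hp2⟩ := hex.choose_spec
  rw [hpe]
  refine ⟨hp1, ?_⟩
  rw [← norm_eq_iInf_iff_real_inner_le_zero hcv hp1]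
  exact le_antisymm (le_ciInf fun w => hp2 w w.2) (ciInf_le hbdd ⟨_, hp1⟩)

lemma projK_eq (hne : K.Nonempty) (hcl : IsClosed K) (hcv : Convex ℝ K) {z w : E}
    (hw : w ∈ K) (hvi : ∀ y ∈ K, ⟪z - w, y - w⟫ ≤ 0) : projK K z = w := by
  obtain ⟨hpK, hpvi⟩ := projK_spec hne hcl hcv z
  have h1 : ⟪z - projK K z, w - projK K z⟫ ≤ 0 := hpvi w hw
  have h2 : ⟪z - w, projK K z - w⟫ ≤ 0 := hvi _ hpK
  have hkey : ⟪w - projK K z, w - projK K z⟫ ≤ 0 := by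
    have e : ⟪w - projK K z, w - projK K z⟫
        = ⟪z - projK K z, w - projK K z⟫ + ⟪z - w, projK K z - w⟫ := by
      simp only [inner_sub_left, inner_sub_right]; ring
    linarith
  have := real_inner_self_nonpos.mp hkey
  have : w = projK K z := by
    have h := sub_eq_zero.mp this
    exact h
  exact this.symm

lemma projK_lip (hne : K.Nonempty) (hcl : IsClosed K) (hcv : Convex ℝ K) (z1 z2 : E) :
    ‖projK K z1 - projK K z2‖ ≤ ‖z1 - z2‖ := by
  obtain ⟨hm1, hv1⟩ := projK_spec hne hcl hcv z1
  obtain ⟨hm2, hv2⟩ := projK_spec hne hcl hcv z2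
  set p1 := projK K z1
  set p2 := projK K z2
  have h1 : ⟪z1 - p1, p2 - p1⟫ ≤ 0 := hv1 _ hm2
  have h2 : ⟪z2 - p2, p1 - p2⟫ ≤ 0 := hv2 _ hm1
  have e : ⟪p1 - p2, p1 - p2⟫
      = ⟪z1 - p1, p2 - p1⟫ + ⟪z2 - p2, p1 - p2⟫ + ⟪z1 - z2, p1 - p2⟫ := by
    simp only [inner_sub_left, inner_sub_right]; ring
  have hsq : ‖p1 - p2‖ * ‖p1 - p2‖ ≤ ‖z1 - z2‖ * ‖p1 - p2‖ := by
    have hn := real_inner_self_eq_norm_mul_norm (p1 - p2)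
    have hcs := real_inner_le_norm (z1 - z2) (p1 - p2)
    nlinarith
  rcases (norm_nonneg (p1 - p2)).eq_or_lt with h | h
  · rw [← h]; exact norm_nonneg _
  · exact le_of_mul_le_mul_right hsq h

lemma sub_projK_mem_nCone (hne : K.Nonempty) (hcl : IsClosed K) (hcv : Convex ℝ K) (z : E) :
    z - projK K z ∈ nCone K (projK K z) :=
  ⟨(projK_spec hne hcl hcv z).1, (projK_spec hne hcl hcv z).2⟩

lemma projK_add_of_mem_nCone (hne : K.Nonempty) (hcl : IsClosed K) (hcv : Convex ℝ K)
    {w l : E} (h : l ∈ nCone K w) : projK K (w + l) = w :=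
  projK_eq hne hcl hcv h.1 (fun y hy => by
    simpa [add_sub_cancel_left] using h.2 y hy)

end ProjHelpers

/-- Theorem 3.1: the local error bound
`‖x − x̄‖ + dist(λ, M(x̄,0,0)) ≤ c‖(∇ₓL(x,λ), g(x) − Π_K(λ + g(x)))‖` near `(x̄,λ̄)`
holds iff `S_KKT` is strongly calm at the origin for `(x̄,λ̄)`. -/
theorem stmt_4 (f : X → ℝ) (g : X → Y) (K : Set Y)
    (hf : ContDiff ℝ 2 f) (hg : ContDiff ℝ 2 g)
    (hKne : K.Nonempty) (hKcl : IsClosed K) (hKcv : Convex ℝ K)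
    (hKred : C2ConeReducible K)
    (x0 : X) (l0 : Y) (hKKT : (x0, l0) ∈ sKKT f g K 0 0) :
    (∃ ε c : ℝ, 0 < ε ∧ 0 < c ∧ ∀ (x : X) (l : Y), ‖(x, l) - (x0, l0)‖ ≤ ε →
        ‖x - x0‖ + infDist l (mSet f g K x0 0 0) ≤
          c * ‖(gradient f x + ContinuousLinearMap.adjoint (fderiv ℝ g x) l,
                g x - projK K (l + g x))‖)
    ↔ StrongCalm f g K x0 l0 := by
  constructor
  · -- error bound ⇒ strong calmness
    rintro ⟨ε, c, hε, hc, hEB⟩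
    refine ⟨1, ε, 2 * c, one_pos, hε, by positivity, ?_⟩
    intro a b hab x l hxl hnear
    obtain ⟨heq, hnc⟩ := hxl
    have hproj : projK K ((g x - b) + l) = g x - b :=
      projK_add_of_mem_nCone hKne hKcl hKcv hnc
    have hres2 : ‖g x - projK K (l + g x)‖ ≤ 2 * ‖b‖ := by
      have hlip := projK_lip hKne hKcl hKcv (g x - b + l) (l + g x) (K := K)
      have hdiff : (g x - b + l) - (l + g x) = -b := by abel
      rw [hdiff, norm_neg] at hlip
      calc ‖g x - projK K (l + g x)‖
          = ‖b + (projK K (g x - b + l) - projK K (l + g x))‖ := by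
            rw [hproj]; congr 1; abel
        _ ≤ ‖b‖ + ‖projK K (g x - b + l) - projK K (l + g x)‖ := norm_add_le _ _
        _ ≤ ‖b‖ + ‖b‖ := by linarith
        _ = 2 * ‖b‖ := by ring
    have hbound := hEB x l hnear
    rw [heq] at hbound
    have hprod : ‖(a, g x - projK K (l + g x))‖ ≤ 2 * ‖(a, b)‖ := by
      rw [Prod.norm_def, Prod.norm_def]
      simp only
      have h1 : ‖a‖ ≤ 2 * max ‖a‖ ‖b‖ := by
        have := le_max_left ‖a‖ ‖b‖
        have := (norm_nonneg a).trans (le_max_left ‖a‖ ‖b‖)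
        linarith
      have h2 : ‖g x - projK K (l + g x)‖ ≤ 2 * max ‖a‖ ‖b‖ := by
        have := le_max_right ‖a‖ ‖b‖
        linarith
      exact max_le h1 h2
    calc ‖x - x0‖ + infDist l (mSet f g K x0 0 0)
        ≤ c * ‖(a, g x - projK K (l + g x))‖ := hbound
      _ ≤ c * (2 * ‖(a, b)‖) := by
          exact mul_le_mul_of_nonneg_left hprod hc.le
      _ = 2 * c * ‖(a, b)‖ := by ring
  · -- strong calmness ⇒ error bound
    rintro ⟨δ, ε, κ, hδ, hε, hκ, hSC⟩
    set Cg : ℝ := ‖fderiv ℝ g x0‖ + 1 with hCgdef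
    have hCg1 : (1 : ℝ) ≤ Cg := by
      rw [hCgdef]; linarith [norm_nonneg (fderiv ℝ g x0)]
    set η : ℝ := min (δ / (1 + Cg)) (ε / 2) with hηdef
    have hCgpos : (0 : ℝ) < 1 + Cg := by linarith
    have hη : 0 < η := by
      rw [hηdef]
      exact lt_min (div_pos hδ hCgpos) (by linarith)
    -- continuity of the residual map
    have hgrad_cont : Continuous fun u : X => gradient f u := by
      have h1 : Continuous fun u : X => fderiv ℝ f u := hf.continuous_fderiv two_ne_zero
      have : (fun u : X => gradient f u)
          = fun u => (InnerProductSpace.toDual ℝ X).symm (fderiv ℝ f u) := rfl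
      rw [this]
      exact (InnerProductSpace.toDual ℝ X).symm.continuous.comp h1
    have hfd_cont : Continuous fun u : X => fderiv ℝ g u := hg.continuous_fderiv two_ne_zero
    have hadj_cont : Continuous fun p : X × Y =>
        ContinuousLinearMap.adjoint (fderiv ℝ g p.1) p.2 := by
      have h1 : Continuous fun p : X × Y =>
          ((ContinuousLinearMap.adjoint (fderiv ℝ g p.1) : Y →L[ℝ] X), p.2) :=
        (ContinuousLinearMap.adjoint.continuous.comp (hfd_cont.comp continuous_fst)).prodMk
          continuous_snd
      exact isBoundedBilinearMap_apply.continuous.comp h1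
    have hprojlip : LipschitzWith 1 (projK K (E := Y)) := by
      refine LipschitzWith.of_dist_le_mul fun z1 z2 => ?_
      simp only [NNReal.coe_one, one_mul, dist_eq_norm]
      exact projK_lip hKne hKcl hKcv z1 z2
    have hRcont : Continuous fun p : X × Y =>
        (gradient f p.1 + ContinuousLinearMap.adjoint (fderiv ℝ g p.1) p.2,
          g p.1 - projK K (p.2 + g p.1)) := by
      refine Continuous.prodMk ?_ ?_
      · exact (hgrad_cont.comp continuous_fst).add hadj_cont
      · exact (hg.continuous.comp continuous_fst).sub
          (hprojlip.continuous.comp (continuous_snd.add (hg.continuous.comp continuous_fst)))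
    have hR0 : (gradient f x0 + ContinuousLinearMap.adjoint (fderiv ℝ g x0) l0,
        g x0 - projK K (l0 + g x0)) = (0 : X × Y) := by
      obtain ⟨heq0, hnc0⟩ := hKKT
      have hnc0' : l0 ∈ nCone K (g x0) := by simpa using hnc0
      have h2 : projK K (g x0 + l0) = g x0 := projK_add_of_mem_nCone hKne hKcl hKcv hnc0'
      rw [add_comm l0 (g x0), h2]
      have : gradient f x0 + ContinuousLinearMap.adjoint (fderiv ℝ g x0) l0 = 0 := heq0
      rw [this]
      simp [Prod.ext_iff]
    -- eventually small residual and bounded derivative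
    have hev1 : ∀ᶠ p : X × Y in 𝓝 (x0, l0),
        ‖(gradient f p.1 + ContinuousLinearMap.adjoint (fderiv ℝ g p.1) p.2,
          g p.1 - projK K (p.2 + g p.1))‖ < η := by
      have ht := (hRcont.norm.tendsto (x0, l0))
      rw [hR0, norm_zero] at ht
      exact ht.eventually_lt_const hη
    have hev2 : ∀ᶠ p : X × Y in 𝓝 (x0, l0), ‖fderiv ℝ g p.1‖ < Cg := by
      have hfd_ev : ∀ᶠ u : X in 𝓝 x0, ‖fderiv ℝ g u‖ < Cg := by
        have ht := hfd_cont.norm.tendsto x0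
        exact ht.eventually_lt_const (by rw [hCgdef]; linarith)
      exact (continuous_fst.tendsto (x0, l0)).eventually hfd_ev
    obtain ⟨r, hr, hball⟩ := Metric.eventually_nhds_iff_ball.mp (hev1.and hev2)
    refine ⟨min (r / 2) (ε / 2), κ * (1 + Cg) + 1, by positivity, by positivity, ?_⟩
    intro x l hnear
    have hnear' : dist (x, l) (x0, l0) < r := by
      rw [dist_eq_norm]
      calc ‖(x, l) - (x0, l0)‖ ≤ min (r / 2) (ε / 2) := hnear
        _ ≤ r / 2 := min_le_left _ _
        _ < r := by linarith
    obtain ⟨hRlt, hfdlt⟩ := hball (x, l) (Metric.mem_ball.mpr hnear')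
    set res1 := gradient f x + ContinuousLinearMap.adjoint (fderiv ℝ g x) l with hres1def
    set res2 := g x - projK K (l + g x) with hres2def
    -- goal : ‖x - x0‖ + infDist l M ≤ c * ‖(res1, res2)‖
    set M := mSet f g K x0 0 0 with hMdef
    set N := ‖(res1, res2)‖ with hNdef
    have hres1N : ‖res1‖ ≤ N := by rw [hNdef, Prod.norm_def]; exact le_max_left _ _
    have hres2N : ‖res2‖ ≤ N := by rw [hNdef, Prod.norm_def]; exact le_max_right _ _
    have hNη : N < η := hRlt
    have hNnn : 0 ≤ N := norm_nonneg _
    -- the shifted multiplier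
    set lh := l + res2 with hlhdef
    have hlh2 : lh = (l + g x) - projK K (l + g x) := by rw [hlhdef, hres2def]; abel
    set ahat := res1 + ContinuousLinearMap.adjoint (fderiv ℝ g x) res2 with hahatdef
    have hmem : (x, lh) ∈ sKKT f g K ahat res2 := by
      constructor
      · show gradient f x + ContinuousLinearMap.adjoint (fderiv ℝ g x) lh = ahat
        rw [hlhdef, map_add, hahatdef, hres1def]
        abel
      · show lh ∈ nCone K (g x - res2)
        have hw : g x - res2 = projK K (l + g x) := by rw [hres2def]; abel
        rw [hw, hlh2]
        exact sub_projK_mem_nCone hKne hKcl hKcv (l + g x)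
    -- norm bounds
    have hadjnorm : ‖ContinuousLinearMap.adjoint (fderiv ℝ g x) res2‖ ≤ Cg * N := by
      calc ‖ContinuousLinearMap.adjoint (fderiv ℝ g x) res2‖
          ≤ ‖ContinuousLinearMap.adjoint (fderiv ℝ g x)‖ * ‖res2‖ :=
            ContinuousLinearMap.le_opNorm _ _
        _ = ‖fderiv ℝ g x‖ * ‖res2‖ := by
            rw [ContinuousLinearMap.adjoint.norm_map]
        _ ≤ Cg * N := by
            have h1 : ‖fderiv ℝ g x‖ ≤ Cg := hfdlt.le
            have h2 : (0 : ℝ) ≤ ‖res2‖ := norm_nonneg _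
            exact mul_le_mul h1 hres2N h2 (by linarith)
    have hahatN : ‖ahat‖ ≤ (1 + Cg) * N := by
      calc ‖ahat‖ ≤ ‖res1‖ + ‖ContinuousLinearMap.adjoint (fderiv ℝ g x) res2‖ :=
          norm_add_le _ _
        _ ≤ N + Cg * N := by linarith
        _ = (1 + Cg) * N := by ring
    have habN : ‖(ahat, res2)‖ ≤ (1 + Cg) * N := by
      rw [Prod.norm_def]
      refine max_le hahatN ?_
      calc ‖res2‖ ≤ N := hres2N
        _ ≤ (1 + Cg) * N := by nlinarith
    have habδ : ‖(ahat, res2)‖ ≤ δ := by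
      have h1 : η ≤ δ / (1 + Cg) := by rw [hηdef]; exact min_le_left _ _
      have h2 : (1 + Cg) * N ≤ (1 + Cg) * (δ / (1 + Cg)) := by
        apply mul_le_mul_of_nonneg_left _ hCgpos.le
        linarith
      rw [mul_div_cancel₀ _ (ne_of_gt hCgpos)] at h2
      linarith
    have hnearε : ‖(x, lh) - (x0, l0)‖ ≤ ε := by
      have hx : ‖x - x0‖ ≤ ε / 2 := by
        have h1 : ‖x - x0‖ ≤ ‖(x, l) - (x0, l0)‖ := by
          rw [Prod.norm_def]; exact le_max_left _ _
        have h2 : ‖(x, l) - (x0, l0)‖ ≤ ε / 2 := hnear.trans (min_le_right _ _)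
        linarith
      have hl : ‖lh - l0‖ ≤ ε := by
        have h1 : ‖l - l0‖ ≤ ‖(x, l) - (x0, l0)‖ := by
          rw [Prod.norm_def]; exact le_max_right _ _
        have h2 : ‖(x, l) - (x0, l0)‖ ≤ ε / 2 := hnear.trans (min_le_right _ _)
        have h3 : ‖lh - l0‖ ≤ ‖l - l0‖ + ‖res2‖ := by
          rw [hlhdef]
          calc ‖l + res2 - l0‖ = ‖(l - l0) + res2‖ := by congr 1; abel
            _ ≤ ‖l - l0‖ + ‖res2‖ := norm_add_le _ _
        have h4 : η ≤ ε / 2 := by rw [hηdef]; exact min_le_right _ _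
        linarith
      have : (x, lh) - (x0, l0) = (x - x0, lh - l0) := rfl
      rw [this, Prod.norm_def]
      exact max_le (by linarith) hl
    have hkey := hSC ahat res2 habδ x lh hmem hnearε
    have hinf : infDist l M ≤ infDist lh M + ‖res2‖ := by
      have := infDist_le_infDist_add_dist (x := l) (y := lh) (s := M)
      have hd : dist l lh = ‖res2‖ := by
        rw [dist_eq_norm, hlhdef]
        simp
      linarith
    have hκab : κ * ‖(ahat, res2)‖ ≤ κ * ((1 + Cg) * N) :=
      mul_le_mul_of_nonneg_left habN hκ.le
    calc ‖x - x0‖ + infDist l M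
        ≤ ‖x - x0‖ + infDist lh M + ‖res2‖ := by linarith
      _ ≤ κ * ‖(ahat, res2)‖ + ‖res2‖ := by linarith
      _ ≤ κ * ((1 + Cg) * N) + N := by linarith
      _ = (κ * (1 + Cg) + 1) * N := by ring

end
end

section
/- Let (x̄,λ̄) be a KKT point of the unperturbed problem (a,b)=(0,0). Then the multiplier set map M(x,a,b) is calm at (x̄,0,0) for λ̄ if and only if the map G_x̄(η,y) = {λ ∈ Y : η + ∇g(x̄)*λ = 0 and y = Π_K(y + λ)} is calm at (∇f(x̄), g(x̄)) for λ̄. -/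
/-!
Since `λ ∈ N_K(y)` iff `y = Π_K(y + λ)`, the slice `M(x̄, a, b)` is `G_x̄(∇f(x̄) - a, g(x̄) - b)`,
which transfers calmness from `M` to `G_x̄`. Conversely, a multiplier `λ ∈ M(x, a, b)` near `λ̄`
lies in `G_x̄(-∇g(x̄)*λ, g(x) - b)`, and differentiability of `∇f`, `g'` and `g` at `x̄` puts
this parameter within `O(‖(x - x̄, a, b)‖)` of `(∇f(x̄), g(x̄))`.
-/

open Set Filter Topology Metric Pointwise
open scoped RealInnerProductSpace Classical

noncomputable section

variable {X Y : Type*} [NormedAddCommGroup X] [InnerProductSpace ℝ X]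
  [FiniteDimensional ℝ X] [NormedAddCommGroup Y] [InnerProductSpace ℝ Y]
  [FiniteDimensional ℝ Y]

section MetricProjection

variable {E : Type*} [NormedAddCommGroup E] [InnerProductSpace ℝ E] {K : Set E}

theorem forall_norm_sub_le_iff_inner_le_zero (hcv : Convex ℝ K) {z p : E} (hp : p ∈ K) :
    (∀ y ∈ K, ‖z - p‖ ≤ ‖z - y‖) ↔ ∀ w ∈ K, ⟪z - p, w - p⟫ ≤ 0 := by
  rw [← norm_eq_iInf_iff_real_inner_le_zero hcv hp]
  have : Nonempty K := ⟨⟨p, hp⟩⟩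
  have hbdd : BddBelow (range fun w : K => ‖z - (w : E)‖) :=
    ⟨0, by rintro _ ⟨w, rfl⟩; exact norm_nonneg _⟩
  refine ⟨fun h => le_antisymm (le_ciInf fun w => h w w.2) (ciInf_le hbdd ⟨p, hp⟩),
    fun h y hy => h ▸ ciInf_le hbdd ⟨y, hy⟩⟩

theorem eq_of_inner_le_zero_of_inner_le_zero {z p q : E} (hp : p ∈ K) (hq : q ∈ K)
    (hvp : ∀ w ∈ K, ⟪z - p, w - p⟫ ≤ 0) (hvq : ∀ w ∈ K, ⟪z - q, w - q⟫ ≤ 0) : p = q := by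
  have h : ⟪p - q, p - q⟫ = ⟪z - p, q - p⟫ + ⟪z - q, p - q⟫ := by
    rw [← neg_sub p q, inner_neg_right, ← sub_eq_neg_add, ← inner_sub_left]
    congr 1; abel
  have : ⟪p - q, p - q⟫ ≤ 0 := by linarith [hvp q hq, hvq p hp]
  exact sub_eq_zero.1 (real_inner_self_nonpos.1 this)

theorem projK_eq_iff [CompleteSpace E] (hne : K.Nonempty) (hcl : IsClosed K)
    (hcv : Convex ℝ K) {z p : E} :
    projK K z = p ↔ p ∈ K ∧ ∀ w ∈ K, ⟪z - p, w - p⟫ ≤ 0 := by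
  have hex : ∃ p, p ∈ K ∧ ∀ y ∈ K, ‖z - p‖ ≤ ‖z - y‖ := by
    obtain ⟨q, hq, hmin⟩ := exists_norm_eq_iInf_of_complete_convex hne hcl.isComplete hcv z
    exact ⟨q, hq, (forall_norm_sub_le_iff_inner_le_zero hcv hq).2
      ((norm_eq_iInf_iff_real_inner_le_zero hcv hq).1 hmin)⟩
  obtain ⟨hmem, hmin⟩ := hex.choose_spec
  have hproj : projK K z = hex.choose := dif_pos hex
  have hvar := (forall_norm_sub_le_iff_inner_le_zero hcv hmem).1 hmin
  rw [hproj]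
  refine ⟨fun h => h ▸ ⟨hmem, hvar⟩, fun ⟨hp, hvp⟩ => ?_⟩
  exact eq_of_inner_le_zero_of_inner_le_zero hmem hp hvar hvp

theorem mem_nCone_iff_eq_projK [CompleteSpace E] (hne : K.Nonempty) (hcl : IsClosed K)
    (hcv : Convex ℝ K) {y l : E} : l ∈ nCone K y ↔ y = projK K (y + l) := by
  rw [eq_comm, projK_eq_iff hne hcl hcv, add_sub_cancel_left]
  rfl

end MetricProjection

theorem Calm.of_eventually_exists_mem {Z Z' W : Type*} [NormedAddCommGroup Z]
    [NormedAddCommGroup Z'] [NormedAddCommGroup W] {F : Z → Set W} {H : Z' → Set W}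
    {z0 : Z} {z0' : Z'} {w0 : W} (hF : Calm F z0 w0) (h0 : F z0 ⊆ H z0') {C ρ : ℝ}
    (hC : 0 < C) (hρ : 0 < ρ)
    (hH : ∀ᶠ z' in 𝓝 z0', ∀ w ∈ H z', ‖w - w0‖ ≤ ρ →
      ∃ z, w ∈ F z ∧ ‖z - z0‖ ≤ C * ‖z' - z0'‖) :
    Calm H z0' w0 := by
  obtain ⟨κ, ε, δ, hκ, hε, hδ, hcalm⟩ := hF
  obtain ⟨r, hr, hball⟩ := Metric.eventually_nhds_iff_ball.1 hH
  refine ⟨κ * C, min (r / 2) (ε / C), min δ ρ, by positivity, by positivity, by positivity, ?_⟩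
  intro z' hz' w hw hwδ
  have hz'r : z' ∈ ball z0' r :=
    mem_ball_iff_norm.2 (by linarith [hz'.trans (min_le_left _ _)])
  obtain ⟨z, hwz, hzle⟩ := hball z' hz'r w hw (hwδ.trans (min_le_right _ _))
  have hzε : ‖z - z0‖ ≤ ε :=
    calc ‖z - z0‖ ≤ C * ‖z' - z0'‖ := hzle
      _ ≤ C * (ε / C) := by gcongr; exact hz'.trans (min_le_right _ _)
      _ = ε := mul_div_cancel₀ _ hC.ne'
  obtain ⟨w', hw', hle⟩ := hcalm z hzε w hwz (hwδ.trans (min_le_left _ _))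
  exact ⟨w', h0 hw', hle.trans (by rw [mul_assoc]; gcongr)⟩

theorem DifferentiableAt.exists_eventually_norm_sub_le {𝕜 E F : Type*}
    [NontriviallyNormedField 𝕜] [NormedAddCommGroup E] [NormedSpace 𝕜 E]
    [NormedAddCommGroup F] [NormedSpace 𝕜 F] {φ : E → F} {x0 : E}
    (h : DifferentiableAt 𝕜 φ x0) : ∃ c > 0, ∀ᶠ x in 𝓝 x0, ‖φ x - φ x0‖ ≤ c * ‖x - x0‖ := by
  obtain ⟨c, hc, hO⟩ := h.isBigO_sub.exists_pos
  exact ⟨c, hc, hO.bound⟩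

open ContinuousLinearMap in
theorem norm_neg_adjoint_apply_sub_le {X Y : Type*} [NormedAddCommGroup X]
    [InnerProductSpace ℝ X] [CompleteSpace X] [NormedAddCommGroup Y] [InnerProductSpace ℝ Y]
    [CompleteSpace Y] {A A0 : X →L[ℝ] Y} {u u0 a : X} {l : Y} (h : u + adjoint A l = a) :
    ‖-adjoint A0 l - u0‖ ≤ ‖A - A0‖ * ‖l‖ + ‖u - u0‖ + ‖a‖ := by
  have hsplit : -adjoint A0 l - u0 = adjoint (A - A0) l + (u - u0) - a := by
    rw [map_sub, sub_apply, ← h]; abel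
  calc ‖-adjoint A0 l - u0‖ ≤ ‖adjoint (A - A0) l‖ + ‖u - u0‖ + ‖a‖ := by
        rw [hsplit]; exact norm_sub_le_of_le (norm_add_le _ _) le_rfl
    _ ≤ ‖A - A0‖ * ‖l‖ + ‖u - u0‖ + ‖a‖ := by
        gcongr
        exact ((adjoint (A - A0)).le_opNorm l).trans_eq (by rw [LinearIsometryEquiv.norm_map])

section KKT

variable {f : X → ℝ} {g : X → Y} {K : Set Y}

/-- The map `G_x̄` of the paper. -/
def multiplierMapAt (g : X → Y) (K : Set Y) (x0 : X) (p : X × Y) : Set Y :=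
  {l | p.1 + ContinuousLinearMap.adjoint (fderiv ℝ g x0) l = 0 ∧ p.2 = projK K (p.2 + l)}

theorem mem_mSet_iff (hne : K.Nonempty) (hcl : IsClosed K) (hcv : Convex ℝ K)
    {x a : X} {b l : Y} :
    l ∈ mSet f g K x a b ↔ gradient f x + ContinuousLinearMap.adjoint (fderiv ℝ g x) l = a ∧
      g x - b = projK K (g x - b + l) :=
  Iff.and Iff.rfl (mem_nCone_iff_eq_projK hne hcl hcv)

theorem mem_multiplierMapAt_iff (hne : K.Nonempty) (hcl : IsClosed K) (hcv : Convex ℝ K)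
    {x0 : X} {p : X × Y} {l : Y} :
    l ∈ multiplierMapAt g K x0 p ↔ l ∈ mSet f g K x0 (gradient f x0 - p.1) (g x0 - p.2) := by
  rw [mem_mSet_iff hne hcl hcv, sub_sub_cancel, sub_eq_add_neg, add_right_inj,
    eq_neg_iff_add_eq_zero, add_comm]
  rfl

theorem multiplierMapAt_gradient_eq (hne : K.Nonempty) (hcl : IsClosed K) (hcv : Convex ℝ K)
    (x0 : X) :
    multiplierMapAt g K x0 (gradient f x0, g x0) = mSet f g K x0 0 0 := by
  ext l
  rw [mem_multiplierMapAt_iff (f := f) hne hcl hcv, sub_self, sub_self]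

theorem calm_multiplierMapAt_of_calm_mSet (hne : K.Nonempty) (hcl : IsClosed K)
    (hcv : Convex ℝ K) {x0 : X} {l0 : Y}
    (h : Calm (fun q : X × X × Y => mSet f g K q.1 q.2.1 q.2.2) (x0, 0, 0) l0) :
    Calm (multiplierMapAt g K x0) (gradient f x0, g x0) l0 := by
  refine h.of_eventually_exists_mem (multiplierMapAt_gradient_eq hne hcl hcv x0).ge one_pos
    one_pos (Eventually.of_forall fun p l hl _ => ⟨(x0, gradient f x0 - p.1, g x0 - p.2),
      (mem_multiplierMapAt_iff hne hcl hcv).1 hl, ?_⟩)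
  rw [one_mul, ← norm_neg]
  simp [Prod.norm_def]

theorem eventually_exists_mem_multiplierMapAt (hne : K.Nonempty) (hcl : IsClosed K)
    (hcv : Convex ℝ K) {x0 : X} (l0 : Y)
    (hdf : DifferentiableAt ℝ (gradient f) x0) (hdA : DifferentiableAt ℝ (fderiv ℝ g) x0)
    (hdg : DifferentiableAt ℝ g x0) :
    ∃ C > 0, ∀ᶠ q in 𝓝 (x0, (0 : X), (0 : Y)), ∀ l ∈ mSet f g K q.1 q.2.1 q.2.2,
      ‖l - l0‖ ≤ 1 → ∃ p, l ∈ multiplierMapAt g K x0 p ∧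
        ‖p - (gradient f x0, g x0)‖ ≤ C * ‖q - (x0, 0, 0)‖ := by
  obtain ⟨cf, hcf, hf⟩ := hdf.exists_eventually_norm_sub_le
  obtain ⟨cA, hcA, hA⟩ := hdA.exists_eventually_norm_sub_le
  obtain ⟨cg, hcg, hg⟩ := hdg.exists_eventually_norm_sub_le
  have hfst : Tendsto Prod.fst (𝓝 (x0, (0 : X), (0 : Y))) (𝓝 x0) := continuous_fst.tendsto _
  refine ⟨cA * (‖l0‖ + 1) + cf + cg + 2, by positivity, ?_⟩
  filter_upwards [hfst.eventually hf, hfst.eventually hA, hfst.eventually hg]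
    with ⟨x, a, b⟩ hfx hAx hgx
  rintro l hl hll0
  obtain ⟨hstat, hproj⟩ := (mem_mSet_iff hne hcl hcv).1 hl
  refine ⟨(-ContinuousLinearMap.adjoint (fderiv ℝ g x0) l, g x - b),
    ⟨neg_add_cancel _, hproj⟩, ?_⟩
  have hq : ((x, a, b) : X × X × Y) - (x0, 0, 0) = (x - x0, a, b) := by simp
  rw [hq, Prod.mk_sub_mk, norm_prod_le_iff]
  have hxN : ‖x - x0‖ ≤ ‖(x - x0, a, b)‖ := norm_fst_le (x - x0, a, b)
  have haN : ‖a‖ ≤ ‖(x - x0, a, b)‖ := (norm_fst_le (a, b)).trans (norm_snd_le (x - x0, a, b))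
  have hbN : ‖b‖ ≤ ‖(x - x0, a, b)‖ := (norm_snd_le (a, b)).trans (norm_snd_le (x - x0, a, b))
  set N := ‖(x - x0, a, b)‖
  have hN : 0 ≤ N := norm_nonneg _
  have hl : ‖l‖ ≤ ‖l0‖ + 1 := by linarith [norm_le_norm_add_norm_sub' l l0]
  constructor
  · calc ‖-ContinuousLinearMap.adjoint (fderiv ℝ g x0) l - gradient f x0‖
        ≤ ‖fderiv ℝ g x - fderiv ℝ g x0‖ * ‖l‖ + ‖gradient f x - gradient f x0‖ + ‖a‖ :=
          norm_neg_adjoint_apply_sub_le hstat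
      _ ≤ cA * N * (‖l0‖ + 1) + cf * N + N := by
          gcongr
          exacts [hAx.trans (by gcongr), hfx.trans (by gcongr)]
      _ ≤ _ := by nlinarith [mul_nonneg (by positivity : 0 ≤ cg + 1) hN]
  · calc ‖g x - b - g x0‖ ≤ ‖g x - g x0‖ + ‖b‖ := by
          rw [sub_right_comm]; exact norm_sub_le _ _
      _ ≤ cg * N + N := by gcongr; exact hgx.trans (by gcongr)
      _ ≤ _ := by nlinarith [mul_nonneg (by positivity : 0 ≤ cA * (‖l0‖ + 1) + cf + 1) hN]

theorem calm_mSet_of_calm_multiplierMapAt (hne : K.Nonempty) (hcl : IsClosed K)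
    (hcv : Convex ℝ K) {x0 : X} {l0 : Y}
    (hdf : DifferentiableAt ℝ (gradient f) x0) (hdA : DifferentiableAt ℝ (fderiv ℝ g) x0)
    (hdg : DifferentiableAt ℝ g x0)
    (h : Calm (multiplierMapAt g K x0) (gradient f x0, g x0) l0) :
    Calm (fun q : X × X × Y => mSet f g K q.1 q.2.1 q.2.2) (x0, 0, 0) l0 := by
  obtain ⟨C, hC, hbound⟩ := eventually_exists_mem_multiplierMapAt hne hcl hcv l0 hdf hdA hdg
  exact h.of_eventually_exists_mem (multiplierMapAt_gradient_eq hne hcl hcv x0).le hC one_pos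
    hbound

end KKT

theorem stmt_8_general (f : X → ℝ) (g : X → Y) (K : Set Y)
    (hf : ContDiff ℝ 2 f) (hg : ContDiff ℝ 2 g)
    (hKne : K.Nonempty) (hKcl : IsClosed K) (hKcv : Convex ℝ K)
    (x0 : X) (l0 : Y) :
    Calm (fun q : X × X × Y => mSet f g K q.1 q.2.1 q.2.2) (x0, 0, 0) l0
    ↔ Calm (fun p : X × Y =>
        {l : Y | p.1 + ContinuousLinearMap.adjoint (fderiv ℝ g x0) l = 0 ∧
                 p.2 = projK K (p.2 + l)})
        (gradient f x0, g x0) l0 := by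
  have hdf : DifferentiableAt ℝ (gradient f) x0 :=
    ((InnerProductSpace.toDual ℝ X).symm.contDiff.comp
      (hf.fderiv_right (m := 1) (by norm_num))).differentiable one_ne_zero x0
  have hdA : DifferentiableAt ℝ (fderiv ℝ g) x0 :=
    (hg.fderiv_right (m := 1) (by norm_num)).differentiable one_ne_zero x0
  have hdg : DifferentiableAt ℝ g x0 := hg.differentiable two_ne_zero x0
  exact ⟨calm_multiplierMapAt_of_calm_mSet hKne hKcl hKcv,
    calm_mSet_of_calm_multiplierMapAt hKne hKcl hKcv hdf hdA hdg⟩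

/-- Lemma 3.1: the multiplier set map `M(x,a,b)` is calm at
`(x̄,0,0)` for `λ̄` iff `G_x̄(η,y) = {λ | η + ∇g(x̄)*λ = 0, y = Π_K(y + λ)}` is calm at
`(∇f(x̄), g(x̄))` for `λ̄`. -/
theorem stmt_8 (f : X → ℝ) (g : X → Y) (K : Set Y)
    (hf : ContDiff ℝ 2 f) (hg : ContDiff ℝ 2 g)
    (hKne : K.Nonempty) (hKcl : IsClosed K) (hKcv : Convex ℝ K)
    (hKred : C2ConeReducible K)
    (x0 : X) (l0 : Y) (hKKT : (x0, l0) ∈ sKKT f g K 0 0) :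
    Calm (fun q : X × X × Y => mSet f g K q.1 q.2.1 q.2.2) (x0, 0, 0) l0
    ↔ Calm (fun p : X × Y =>
        {l : Y | p.1 + ContinuousLinearMap.adjoint (fderiv ℝ g x0) l = 0 ∧
                 p.2 = projK K (p.2 + l)})
        (gradient f x0, g x0) l0 :=
  stmt_8_general f g K hf hg hKne hKcl hKcv x0 l0
end
end

section
/- Let (x̄,λ̄) be a KKT point of the unperturbed problem (a,b)=(0,0) with M(x̄,0,0) ≠ {λ̄}. Then S_KKT is strongly calm at the origin for (x̄,λ̄) if and only if X_KKT has the pseudo-isolated calmness at the origin for x̄ (relative to λ̄) and the multiplier set map M is calm at (x̄,0,0) for λ̄. -/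
open Set Filter Topology Metric Pointwise
open scoped RealInnerProductSpace Classical

noncomputable section

variable {X Y : Type*} [NormedAddCommGroup X] [InnerProductSpace ℝ X]
  [FiniteDimensional ℝ X] [NormedAddCommGroup Y] [InnerProductSpace ℝ Y]
  [FiniteDimensional ℝ Y]

theorem norm_mk_sub_mk_zero_zero {E F G : Type*} [SeminormedAddCommGroup E]
    [SeminormedAddCommGroup F] [SeminormedAddCommGroup G] (x x0 : E) (a : F) (b : G) :
    ‖(x, a, b) - (x0, (0 : F), (0 : G))‖ = max ‖x - x0‖ ‖(a, b)‖ := by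
  simp

section

variable {f : X → ℝ} {g : X → Y} {K : Set Y} {x0 : X} {l0 : Y}

theorem StrongCalm.pseudoIsolatedCalm (h : StrongCalm f g K x0 l0) :
    PseudoIsolatedCalm f g K x0 l0 := by
  obtain ⟨δ, ε, κ, hδ, hε, hκ, h⟩ := h
  exact ⟨ε, δ, κ, hε, hδ, hκ, fun a b hab x l hxl hxl0 =>
    (le_add_of_nonneg_right infDist_nonneg).trans (h a b hab x l hxl hxl0)⟩

theorem StrongCalm.calm_mSet (hKKT : (x0, l0) ∈ sKKT f g K 0 0)
    (h : StrongCalm f g K x0 l0) :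
    Calm (fun q : X × X × Y => mSet f g K q.1 q.2.1 q.2.2) (x0, 0, 0) l0 := by
  obtain ⟨δ, ε, κ, hδ, hε, hκ, h⟩ := h
  refine ⟨κ + 1, min ε δ, ε, by positivity, lt_min hε hδ, hε, ?_⟩
  rintro ⟨x, a, b⟩ hq l hl hl0
  rw [norm_mk_sub_mk_zero_zero] at hq ⊢
  obtain ⟨⟨hxε, -⟩, -, habδ⟩ := by simpa only [max_le_iff, le_min_iff] using hq
  have hbound : ‖x - x0‖ + infDist l (mSet f g K x0 0 0) ≤ κ * ‖(a, b)‖ :=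
    h a b habδ x l hl (max_le hxε hl0)
  -- `infDist` need not be attained, so the slack `κ + 1` is needed, which is lost when `(a, b) = 0`
  rcases (norm_nonneg ((a, b) : X × Y)).eq_or_lt with hab | hab
  · obtain ⟨rfl, rfl⟩ := Prod.mk_eq_zero.mp (norm_eq_zero.mp hab.symm)
    have hx : ‖x - x0‖ ≤ 0 := by
      rw [← hab, mul_zero] at hbound
      linarith [infDist_nonneg (x := l) (s := mSet f g K x0 0 0)]
    obtain rfl : x = x0 := sub_eq_zero.mp (norm_le_zero_iff.mp hx)
    exact ⟨l, hl, by simp⟩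
  · have hlt : infDist l (mSet f g K x0 0 0) < (κ + 1) * max ‖x - x0‖ ‖(a, b)‖ :=
      calc infDist l (mSet f g K x0 0 0) ≤ κ * ‖(a, b)‖ := by linarith [norm_nonneg (x - x0)]
        _ < (κ + 1) * ‖(a, b)‖ := by linarith
        _ ≤ (κ + 1) * max ‖x - x0‖ ‖(a, b)‖ := by gcongr; exact le_max_right _ _
    obtain ⟨l', hl', hll'⟩ := (infDist_lt_iff ⟨l0, hKKT⟩).mp hlt
    exact ⟨l', hl', (dist_eq_norm l l' ▸ hll').le⟩

theorem StrongCalm.of_pseudoIsolatedCalm_of_calm (h₁ : PseudoIsolatedCalm f g K x0 l0)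
    (h₂ : Calm (fun q : X × X × Y => mSet f g K q.1 q.2.1 q.2.2) (x0, 0, 0) l0) :
    StrongCalm f g K x0 l0 := by
  obtain ⟨ε₁, δ₁, κ₁, hε₁, hδ₁, hκ₁, h₁⟩ := h₁
  obtain ⟨κ₂, ε₂, δ₂, hκ₂, hε₂, hδ₂, h₂⟩ := h₂
  refine ⟨min δ₁ (ε₂ / (κ₁ + 1)), min ε₁ δ₂, κ₁ + κ₂ * (κ₁ + 1),
    lt_min hδ₁ (by positivity), lt_min hε₁ hδ₂, by positivity, ?_⟩
  intro a b hab x l hxl hxl0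
  rw [le_min_iff, le_div_iff₀' (by positivity)] at hab
  rw [le_min_iff] at hxl0
  have hx : ‖x - x0‖ ≤ κ₁ * ‖(a, b)‖ := h₁ a b hab.1 x l hxl hxl0.1
  have hq : ‖((x, a, b) : X × X × Y) - (x0, 0, 0)‖ ≤ (κ₁ + 1) * ‖(a, b)‖ := by
    rw [norm_mk_sub_mk_zero_zero, add_one_mul]
    exact max_le (hx.trans (le_add_of_nonneg_right (norm_nonneg _)))
      (le_add_of_nonneg_left (by positivity))
  obtain ⟨l', hl', hll'⟩ :=
    h₂ (x, a, b) (hq.trans hab.2) l hxl ((norm_snd_le _).trans hxl0.2)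
  have hinf : infDist l (mSet f g K x0 0 0) ≤ κ₂ * ((κ₁ + 1) * ‖(a, b)‖) :=
    (infDist_le_dist_of_mem hl').trans
      (dist_eq_norm l l' ▸ hll'.trans (mul_le_mul_of_nonneg_left hq hκ₂.le))
  linarith

end

theorem stmt_9_general (f : X → ℝ) (g : X → Y) (K : Set Y)
    (x0 : X) (l0 : Y) (hKKT : (x0, l0) ∈ sKKT f g K 0 0) :
    StrongCalm f g K x0 l0
    ↔ (PseudoIsolatedCalm f g K x0 l0 ∧
       Calm (fun q : X × X × Y => mSet f g K q.1 q.2.1 q.2.2) (x0, 0, 0) l0) :=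
  ⟨fun h => ⟨h.pseudoIsolatedCalm, h.calm_mSet hKKT⟩,
    fun ⟨h₁, h₂⟩ => .of_pseudoIsolatedCalm_of_calm h₁ h₂⟩

/-- Theorem 3.2: for a KKT point `(x̄,λ̄)` with `M(x̄,0,0) ≠ {λ̄}`,
`S_KKT` is strongly calm at the origin for `(x̄,λ̄)` iff `X_KKT` has the pseudo-isolated
calmness at the origin for `x̄` (relative to `λ̄`) and `M` is calm at `(x̄,0,0)` for `λ̄`. -/
theorem stmt_9 (f : X → ℝ) (g : X → Y) (K : Set Y)
    (hf : ContDiff ℝ 2 f) (hg : ContDiff ℝ 2 g)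
    (hKne : K.Nonempty) (hKcl : IsClosed K) (hKcv : Convex ℝ K)
    (hKred : C2ConeReducible K)
    (x0 : X) (l0 : Y) (hKKT : (x0, l0) ∈ sKKT f g K 0 0)
    (hMne : mSet f g K x0 0 0 ≠ {l0}) :
    StrongCalm f g K x0 l0
    ↔ (PseudoIsolatedCalm f g K x0 l0 ∧
       Calm (fun q : X × X × Y => mSet f g K q.1 q.2.1 q.2.2) (x0, 0, 0) l0) :=
  stmt_9_general f g K x0 l0 hKKT

end
end

section
/- Let (x̄,λ̄) be a KKT point of the unperturbed problem (a,b)=(0,0). Suppose the set-valued map F(x) = g(x) − K is metrically subregular at x̄ for the origin, so that the normal cone to the feasible set Ω = g⁻¹(K) at x̄ is N_Ω(x̄) = ∇g(x̄)*N_K(g(x̄)). If ri(N_K(g(x̄))) ∩ M(x̄,0,0) ≠ ∅, then the radial cone R_{N_Ω(x̄)}(−∇f(x̄)) = ∇g(x̄)*N_K(g(x̄)) + ℝ·∇f(x̄) is closed, and consequently the set ∇g(x̄)*[C_K(g(x̄),λ̄)]° is closed (indeed it equals ∇g(x̄)*N_K(g(x̄)) + ℝ·∇f(x̄)). -/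
open Set Filter Topology Metric Pointwise
open scoped RealInnerProductSpace Classical

noncomputable section

variable {X Y : Type*} [NormedAddCommGroup X] [InnerProductSpace ℝ X]
  [FiniteDimensional ℝ X] [NormedAddCommGroup Y] [InnerProductSpace ℝ Y]
  [FiniteDimensional ℝ Y]

/-! Auxiliary lemmas for stmt_12 -/

section auxStmt12
variable {E : Type*} [NormedAddCommGroup E] [InnerProductSpace ℝ E]

/-- The cone of feasible directions. -/
def fdir (K : Set E) (y : E) : Set E := {d | ∃ t : ℝ, 0 < t ∧ y + t • d ∈ K}

lemma fdir_shrink {K : Set E} (hK : Convex ℝ K) {y : E} (hy : y ∈ K) {d : E} {t s : ℝ}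
    (ht : 0 < t) (hm : y + t • d ∈ K) (hs : 0 < s) (hst : s ≤ t) : y + s • d ∈ K := by
  have ht' : t ≠ 0 := ne_of_gt ht
  have key : (1 - s / t) • y + (s / t) • (y + t • d) = y + s • d := by
    rw [smul_add, smul_smul, div_mul_cancel₀ _ ht', sub_smul, one_smul]
    abel
  have h1 : (0:ℝ) ≤ 1 - s / t := by
    have : s / t ≤ 1 := (div_le_one ht).2 hst
    linarith
  have h2 : (0:ℝ) ≤ s / t := le_of_lt (div_pos hs ht)
  have := hK hy hm h1 h2 (by ring)
  rwa [key] at this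

/-- The feasible directions form a convex cone. -/
def fdirCone {K : Set E} (hK : Convex ℝ K) {y : E} (hy : y ∈ K) : ConvexCone ℝ E where
  carrier := fdir K y
  smul_mem' := by
    rintro c hc x ⟨t, ht, hm⟩
    exact ⟨t / c, div_pos ht hc, by rwa [smul_smul, div_mul_cancel₀ _ (ne_of_gt hc)]⟩
  add_mem' := by
    rintro a ⟨t1, ht1, hm1⟩ b ⟨t2, ht2, hm2⟩
    have htm : 0 < min t1 t2 := lt_min ht1 ht2
    have h1 : y + min t1 t2 • a ∈ K := fdir_shrink hK hy ht1 hm1 htm (min_le_left _ _)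
    have h2 : y + min t1 t2 • b ∈ K := fdir_shrink hK hy ht2 hm2 htm (min_le_right _ _)
    refine ⟨min t1 t2 / 2, by positivity, ?_⟩
    have key : y + (min t1 t2 / 2) • (a + b) =
        (1/2 : ℝ) • (y + min t1 t2 • a) + (1/2 : ℝ) • (y + min t1 t2 • b) := by
      match_scalars <;> ring
    rw [key]
    exact hK h1 h2 (by norm_num) (by norm_num) (by norm_num)

lemma contCone_eq {K : Set E} (hK : Convex ℝ K) {y : E} (hy : y ∈ K) :
    contCone K y = closure (fdir K y) := by
  apply subset_antisymm
  · rintro w ⟨t, v, htp, htl, hvl, hmem⟩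
    exact mem_closure_of_tendsto hvl (Eventually.of_forall fun n => ⟨t n, htp n, hmem n⟩)
  · intro w hw
    obtain ⟨v, hvS, hvl⟩ := mem_closure_iff_seq_limit.1 hw
    choose t htp hmem using hvS
    refine ⟨fun n => min (t n) (1/(n+1)), v,
      fun n => lt_min (htp n) (by positivity), ?_, hvl, fun n => ?_⟩
    · apply squeeze_zero (fun n => le_of_lt (lt_min (htp n) (by positivity)))
        (fun n => min_le_right _ _)
      exact tendsto_one_div_add_atTop_nhds_zero_nat
    · exact fdir_shrink hK hy (htp n) (hmem n) (lt_min (htp n) (by positivity))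
        (min_le_left _ _)

lemma inner_nonpos_of_nCone_fdir {K : Set E} {y : E} {n d : E}
    (hn : n ∈ nCone K y) (hd : d ∈ fdir K y) : ⟪n, d⟫ ≤ 0 := by
  obtain ⟨t, ht, hm⟩ := hd
  have := hn.2 _ hm
  rw [add_sub_cancel_left, real_inner_smul_right] at this
  nlinarith

lemma inner_nonpos_of_nCone_contCone {K : Set E} (hK : Convex ℝ K) {y : E} (hy : y ∈ K)
    {n d : E} (hn : n ∈ nCone K y) (hd : d ∈ contCone K y) : ⟪n, d⟫ ≤ 0 := by
  rw [contCone_eq hK hy] at hd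
  have hcl : IsClosed {x : E | ⟪n, x⟫ ≤ 0} :=
    isClosed_le (continuous_const.inner continuous_id) continuous_const
  exact hcl.closure_subset_iff.2 (fun d hd => inner_nonpos_of_nCone_fdir hn hd) hd

/-- Bipolar-type lemma: a vector orthogonal to the whole normal cone is tangent. -/
lemma mem_contCone_of_orth {K : Set E} [CompleteSpace E] (hK : Convex ℝ K) {y : E}
    (hy : y ∈ K) {w : E} (hw : ∀ n ∈ nCone K y, ⟪n, w⟫ = 0) : w ∈ contCone K y := by
  set C := (fdirCone hK hy).closure with hC
  have hCset : (C : Set E) = contCone K y := by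
    rw [contCone_eq hK hy, hC, ConvexCone.coe_closure]
    rfl
  have hne : (C : Set E).Nonempty := by
    refine ⟨0, ?_⟩
    rw [hC, ConvexCone.coe_closure]
    exact subset_closure ⟨1, one_pos, by simpa using hy⟩
  have hcl : IsClosed (C : Set E) := by rw [hC, ConvexCone.coe_closure]; exact isClosed_closure
  obtain ⟨P, hP⟩ := ConvexCone.canLift.prf C ⟨hne, hcl⟩
  have hPset : ((P : Set E)) = (C : Set E) := by rw [← hP]; rfl
  by_contra hnot
  rw [← hCset, ← hPset] at hnot
  obtain ⟨u, hu, hwu⟩ := ProperCone.hyperplane_separation' P hnot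
  have hNu : -u ∈ nCone K y := by
    refine ⟨hy, fun y' hy' => ?_⟩
    have hd : y' - y ∈ (C : Set E) := by
      rw [hC, ConvexCone.coe_closure]
      exact subset_closure ⟨1, one_pos, by simpa using hy'⟩
    rw [← hPset] at hd
    have := hu _ hd
    rw [inner_neg_left]
    rw [real_inner_comm] at this
    linarith
  have := hw _ hNu
  rw [inner_neg_left, real_inner_comm] at this
  linarith [this]

lemma nCone_zero_mem {K : Set E} {y : E} (hy : y ∈ K) : (0:E) ∈ nCone K y :=
  ⟨hy, fun y' _ => by simp⟩

lemma nCone_smul {K : Set E} {y : E} {a : E} {c : ℝ} (hc : 0 ≤ c) (ha : a ∈ nCone K y) :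
    c • a ∈ nCone K y :=
  ⟨ha.1, fun y' hy' => by
    rw [real_inner_smul_left]
    exact mul_nonpos_of_nonneg_of_nonpos hc (ha.2 y' hy')⟩

/-- Radial representation from a relative interior point of a cone. -/
lemma ri_radial {N : Set E} (hcone : ∀ c : ℝ, 0 < c → ∀ n ∈ N, c • n ∈ N)
    (h0 : (0:E) ∈ N) {lh : E} (hlh : lh ∈ intrinsicInterior ℝ N) {w : E}
    (hw : w ∈ Submodule.span ℝ N) : ∃ n ∈ N, ∃ t : ℝ, w = n + t • lh := by
  obtain ⟨p, hp, hpe⟩ := mem_intrinsicInterior.1 hlh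
  have hlhN : lh ∈ N := intrinsicInterior_subset hlh
  have hdir : w ∈ (affineSpan ℝ N).direction := by
    rw [direction_affineSpan]
    refine Submodule.span_le.2 (fun x hx => Submodule.subset_span ?_) hw
    have : x -ᵥ (0:E) ∈ N -ᵥ N := Set.vsub_mem_vsub hx h0
    simpa using this
  have hmem : ∀ t : ℝ, lh + t • w ∈ affineSpan ℝ N := by
    intro t
    have h1 : t • w ∈ (affineSpan ℝ N).direction := Submodule.smul_mem _ _ hdir
    have h2 := AffineSubspace.vadd_mem_of_mem_direction h1 (mem_affineSpan ℝ hlhN)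
    simpa [add_comm] using h2
  set γ : ℝ → affineSpan ℝ N := fun t => ⟨lh + t • w, hmem t⟩ with hγ
  have hγc : Continuous γ :=
    Continuous.subtype_mk (continuous_const.add (continuous_id.smul continuous_const)) _
  have hγ0 : γ 0 = p := Subtype.ext (by simp [hγ, hpe])
  have hnhds : γ ⁻¹' (interior (((↑) : affineSpan ℝ N → E) ⁻¹' N)) ∈ 𝓝 (0:ℝ) :=
    hγc.continuousAt.preimage_mem_nhds (isOpen_interior.mem_nhds (by rw [hγ0]; exact hp))
  obtain ⟨ε, hε, hball⟩ := Metric.mem_nhds_iff.1 hnhds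
  have hb : (ε/2 : ℝ) ∈ Metric.ball (0:ℝ) ε := by
    simp only [Metric.mem_ball, Real.dist_eq, sub_zero]
    rw [abs_of_pos (by positivity)]
    linarith
  have h3 : γ (ε/2) ∈ ((↑) : affineSpan ℝ N → E) ⁻¹' N := interior_subset (hball hb)
  have hNmem : lh + (ε/2) • w ∈ N := h3
  have hne : (ε/2 : ℝ) ≠ 0 := by positivity
  refine ⟨(ε/2)⁻¹ • (lh + (ε/2) • w), hcone _ (by positivity) _ hNmem, -(ε/2)⁻¹, ?_⟩
  rw [smul_add, inv_smul_smul₀ hne, neg_smul]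
  abel

end auxStmt12

/-- Lemma 4.1: if `F(x) = g(x) − K` is metrically subregular at `x̄`
for the origin and `ri(N_K(g(x̄))) ∩ M(x̄,0,0) ≠ ∅`, then the radial cone
`R_{N_Ω(x̄)}(−∇f(x̄)) = ∇g(x̄)*N_K(g(x̄)) + ℝ·∇f(x̄)` is closed, and consequently
`∇g(x̄)*[C_K(g(x̄),λ̄)]°` is closed — indeed it equals `∇g(x̄)*N_K(g(x̄)) + ℝ·∇f(x̄)`. -/
theorem stmt_12 (f : X → ℝ) (g : X → Y) (K : Set Y)
    (hf : ContDiff ℝ 2 f) (hg : ContDiff ℝ 2 g)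
    (hKne : K.Nonempty) (hKcl : IsClosed K) (hKcv : Convex ℝ K)
    (hKred : C2ConeReducible K)
    (x0 : X) (l0 : Y) (hKKT : (x0, l0) ∈ sKKT f g K 0 0)
    (hsub : MetricallySubregular
      (fun x : X => {w : Y | ∃ k ∈ K, w = g x - k}) x0 (0 : Y))
    (hri : (intrinsicInterior ℝ (nCone K (g x0)) ∩ mSet f g K x0 0 0).Nonempty) :
    IsClosed (ContinuousLinearMap.adjoint (fderiv ℝ g x0) '' nCone K (g x0) +
        Set.range fun t : ℝ => t • gradient f x0) ∧
    ContinuousLinearMap.adjoint (fderiv ℝ g x0) '' negPolar (criticalCone K (g x0) l0) =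
      ContinuousLinearMap.adjoint (fderiv ℝ g x0) '' nCone K (g x0) +
        Set.range (fun t : ℝ => t • gradient f x0) ∧
    IsClosed (ContinuousLinearMap.adjoint (fderiv ℝ g x0) ''
        negPolar (criticalCone K (g x0) l0)) := by
  classical
  set A := ContinuousLinearMap.adjoint (fderiv ℝ g x0) with hA
  have heq0 : gradient f x0 + A l0 = 0 := hKKT.1
  have hl0' : l0 ∈ nCone K (g x0 - 0) := hKKT.2
  rw [sub_zero] at hl0'
  have hyK : g x0 ∈ K := hl0'.1
  obtain ⟨lh, hlhri, hlhM⟩ := hri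
  have heqh : gradient f x0 + A lh = 0 := hlhM.1
  have hgrad : gradient f x0 = -(A l0) := eq_neg_of_add_eq_zero_left heq0
  have hAlh : A lh = A l0 := by
    rw [eq_neg_of_add_eq_zero_right heqh, eq_neg_of_add_eq_zero_right heq0]
  set N := nCone K (g x0) with hN
  set W : Submodule ℝ Y := Submodule.span ℝ N with hW
  set V : Submodule ℝ X := W.map (A : Y →ₗ[ℝ] X) with hV
  have hconeN : ∀ c : ℝ, 0 < c → ∀ n ∈ N, c • n ∈ N :=
    fun c hc a ha => nCone_smul (le_of_lt hc) ha
  have key1 : A '' N + Set.range (fun t : ℝ => t • gradient f x0) = (V : Set X) := by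
    apply subset_antisymm
    · rintro z hz
      rw [Set.mem_add] at hz
      obtain ⟨u, ⟨n, hn, rfl⟩, v, ⟨t, rfl⟩, rfl⟩ := hz
      refine Submodule.mem_map.2 ⟨n + (-t) • l0, ?_, ?_⟩
      · exact W.add_mem (Submodule.subset_span hn) (W.smul_mem _ (Submodule.subset_span hl0'))
      · show A (n + (-t) • l0) = A n + t • gradient f x0
        rw [map_add, map_smul, hgrad]
        module
    · rintro z hz
      obtain ⟨m, hm, rfl⟩ := Submodule.mem_map.1 hz
      obtain ⟨n, hnN, t, rfl⟩ := ri_radial hconeN (nCone_zero_mem hyK) hlhri hm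
      rw [Set.mem_add]
      refine ⟨A n, ⟨n, hnN, rfl⟩, (-t) • gradient f x0, ⟨-t, rfl⟩, ?_⟩
      show A n + (-t) • gradient f x0 = A (n + t • lh)
      rw [map_add, map_smul, hAlh, hgrad]
      module
  have key2 : A '' negPolar (criticalCone K (g x0) l0) = (V : Set X) := by
    apply subset_antisymm
    · rintro z ⟨q, hq, rfl⟩
      obtain ⟨q1, hq1, q2, hq2, rfl⟩ := W.exists_add_mem_mem_orthogonal q
      have horth : ∀ u ∈ W, ⟪u, q2⟫ = 0 := (Submodule.mem_orthogonal W q2).1 hq2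
      have hq2C : ∀ s : ℝ, s • q2 ∈ criticalCone K (g x0) l0 := by
        intro s
        constructor
        · apply mem_contCone_of_orth hKcv hyK
          intro n hn
          rw [real_inner_smul_right, horth n (Submodule.subset_span hn), mul_zero]
        · show ⟪l0, s • q2⟫ = 0
          rw [real_inner_smul_right, horth l0 (Submodule.subset_span hl0'), mul_zero]
      have e1 : ⟪q1 + q2, q2⟫ ≤ 0 := hq q2 (by simpa using hq2C 1)
      have e2 : ⟪q1 + q2, -q2⟫ ≤ 0 := hq (-q2) (by simpa using hq2C (-1))
      have hq2z : q2 = 0 := by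
        have h3 : ⟪q1 + q2, q2⟫ = 0 := by
          rw [inner_neg_right] at e2
          linarith
        rw [inner_add_left, horth q1 hq1, zero_add] at h3
        exact inner_self_eq_zero.1 h3
      refine Submodule.mem_map.2 ⟨q1 + q2, ?_, rfl⟩
      rw [hq2z, add_zero]
      exact hq1
    · rintro z hz
      obtain ⟨m, hm, rfl⟩ := Submodule.mem_map.1 hz
      obtain ⟨n, hnN, t, rfl⟩ := ri_radial hconeN (nCone_zero_mem hyK) hlhri hm
      refine ⟨n + t • l0, ?_, ?_⟩
      · intro d hd
        have hd2 : ⟪l0, d⟫ = 0 := hd.2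
        rw [inner_add_left, real_inner_smul_left, hd2, mul_zero, add_zero]
        exact inner_nonpos_of_nCone_contCone hKcv hyK hnN hd.1
      · show A (n + t • l0) = A (n + t • lh)
        rw [map_add, map_smul, map_add, map_smul, hAlh]
  refine ⟨?_, ?_, ?_⟩
  · rw [key1]
    exact V.closed_of_finiteDimensional
  · rw [key1, key2]
  · rw [key2]
    exact V.closed_of_finiteDimensional

end
end
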